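/- arXiv:1608.00483 — 4 statements merged into one kernel-verified Lean document; each statement's English description precedes it below -/
import Mathlib

section
/- (Key Lemma) Let K be a Kan complex, let c = (x_0,…,x_{k-1}, y, x_{k+1},…, x_n) be an (n-1)-boundary in K, and let y' ∈ K_{n-1} satisfy ∂y' = ∂y (so that c' = (x_0,…,x_{k-1}, y', x_{k+1},…, x_n) is an (n-1)-cycle). Then c' is an (n-1)-boundary if and only if y is homotopic to y'. -/
/-- A simplicial set, given combinatorially by sets of `n`-simplices together with
face operators `d i : K_{n+1} → K_n` (`i ≤ n+1`) and degeneracy operators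
`s i : K_n → K_{n+1}` (`i ≤ n`) satisfying the simplicial identities.
(The operators are indexed by natural numbers; their values at out-of-range
indices are irrelevant.) -/
structure SSetC where
  obj : ℕ → Type
  d : (n : ℕ) → ℕ → obj (n + 1) → obj n
  s : (n : ℕ) → ℕ → obj n → obj (n + 1)
  dd : ∀ (n i j : ℕ), i < j → j ≤ n + 2 → ∀ x : obj (n + 2),
      d n i (d (n + 1) j x) = d n (j - 1) (d (n + 1) i x)
  ss : ∀ (n i j : ℕ), i ≤ j → j ≤ n → ∀ x : obj n,
      s (n + 1) i (s n j x) = s (n + 1) (j + 1) (s n i x)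
  ds_lt : ∀ (n i j : ℕ), i < j → j ≤ n + 1 → ∀ x : obj (n + 1),
      d (n + 1) i (s (n + 1) j x) = s n (j - 1) (d n i x)
  ds_self : ∀ (n i : ℕ), i ≤ n → ∀ x : obj n, d n i (s n i x) = x
  ds_succ : ∀ (n i : ℕ), i ≤ n → ∀ x : obj n, d n (i + 1) (s n i x) = x
  ds_gt : ∀ (n i j : ℕ), j + 1 < i → i ≤ n + 2 → ∀ x : obj (n + 1),
      d (n + 1) i (s (n + 1) j x) = s n j (d n (i - 1) x)

namespace SSetC

variable (K : SSetC)

/-- The boundary `∂x = (d_0 x, …, d_{m+1} x)` of an `(m+1)`-simplex. -/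
def bdry {m : ℕ} (x : K.obj (m + 1)) : Fin (m + 2) → K.obj m := fun i => K.d m i x

/-- An `(m+2)`-tuple of `m`-simplices is an `m`-boundary if it is the boundary of
some `(m+1)`-simplex. -/
def IsBoundary {m : ℕ} (c : Fin (m + 2) → K.obj m) : Prop :=
  ∃ x : K.obj (m + 1), K.bdry x = c

/-- An `(m+2)`-tuple of `m`-simplices is compatible (an `m`-cycle) if
`d_i x_j = d_{j-1} x_i` for all `i < j` (a vacuous condition for `m = 0`). -/
def Compat : ∀ {m : ℕ}, (Fin (m + 2) → K.obj m) → Prop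
  | 0 => fun _ => True
  | m + 1 => fun c => ∀ i j : Fin (m + 3), (i : ℕ) < (j : ℕ) →
      K.d m i (c j) = K.d m ((j : ℕ) - 1) (c i)

/-- Compatibility of an `(m,k)`-horn: the entry at position `k` is disregarded. -/
def HornCompat : ∀ {m : ℕ}, ℕ → (Fin (m + 2) → K.obj m) → Prop
  | 0 => fun _ _ => True
  | m + 1 => fun k c => ∀ i j : Fin (m + 3), (i : ℕ) ≠ k → (j : ℕ) ≠ k → (i : ℕ) < (j : ℕ) →
      K.d m i (c j) = K.d m ((j : ℕ) - 1) (c i)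

/-- A simplicial set is a Kan complex if every horn has a filling. -/
def IsKan : Prop :=
  ∀ (m k : ℕ), k ≤ m + 1 → ∀ c : Fin (m + 2) → K.obj m, K.HornCompat k c →
    ∃ x : K.obj (m + 1), ∀ i : Fin (m + 2), (i : ℕ) ≠ k → K.d m i x = c i

/-- The cycle `(s_{n-1} d_0 x, …, s_{n-1} d_{n-1} x, x, y)` used to define homotopy
of `n`-simplices (for `n = 0` it is just `(x, y)`). -/
def homotopyTuple : ∀ {n : ℕ}, K.obj n → K.obj n → Fin (n + 2) → K.obj n
  | 0 => fun x y => ![x, y]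
  | n + 1 => fun x y i =>
      if (i : ℕ) < n + 1 then K.s n n (K.d n i x)
      else if (i : ℕ) = n + 1 then x else y

/-- Two `n`-simplices (with the same boundary) are homotopic if the corresponding
cycle is a boundary. -/
def Homotopic {n : ℕ} (x y : K.obj n) : Prop :=
  K.IsBoundary (K.homotopyTuple x y)

/-- `∂x = ∂y` (a vacuous condition for vertices). -/
def SameBdry : ∀ {n : ℕ}, K.obj n → K.obj n → Prop
  | 0 => fun _ _ => True
  | _ + 1 => fun x y => K.bdry x = K.bdry y

/-- The simplex `⋆_n` of the subcomplex generated by a base point. -/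
def basept (b : K.obj 0) : ∀ n : ℕ, K.obj n
  | 0 => b
  | n + 1 => K.s n 0 (basept b n)

lemma basept_succ (b : K.obj 0) (n : ℕ) : K.basept b (n + 1) = K.s n 0 (K.basept b n) := rfl

lemma s_basept (b : K.obj 0) : ∀ n i : ℕ, i ≤ n → K.s n i (K.basept b n) = K.basept b (n + 1) := by
  intro n
  induction n with
  | zero => intro i hi; interval_cases i; rfl
  | succ n ih =>
    intro i hi
    match i, hi with
    | 0, _ => rfl
    | (i + 1), hi =>
      have h1 : K.basept b (n + 1) = K.s n 0 (K.basept b n) := rfl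
      rw [h1, ← K.ss n 0 i (Nat.zero_le _) (by omega), ih i (by omega)]
      exact (K.basept_succ b (n + 1)).symm

lemma d_basept (b : K.obj 0) : ∀ n i : ℕ, i ≤ n + 1 → K.d n i (K.basept b (n + 1)) = K.basept b n := by
  intro n
  induction n with
  | zero =>
    intro i hi
    interval_cases i
    · exact K.ds_self 0 0 (le_refl 0) b
    · exact K.ds_succ 0 0 (le_refl 0) b
  | succ n ih =>
    intro i hi
    match i, hi with
    | 0, _ => exact K.ds_self (n + 1) 0 (Nat.zero_le _) _
    | 1, _ => exact K.ds_succ (n + 1) 0 (Nat.zero_le _) _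
    | (i + 2), hi =>
      have h1 : K.basept b (n + 1 + 1) = K.s (n + 1) 0 (K.basept b (n + 1)) := rfl
      rw [h1, K.ds_gt n (i + 2) 0 (by omega) (by omega)]
      show K.s n 0 (K.d n (i + 1) (K.basept b (n + 1))) = _
      rw [ih (i + 1) (by omega), K.s_basept b n 0 (Nat.zero_le _)]

/-- An `(m+1)`-simplex is spherical if all of its faces are the base point. -/
def IsSph (b : K.obj 0) {m : ℕ} (x : K.obj (m + 1)) : Prop :=
  ∀ i : Fin (m + 2), K.d m i x = K.basept b m

/-- Sphericality for simplices of arbitrary dimension (vacuous for vertices). -/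
def IsSph' (b : K.obj 0) : ∀ {n : ℕ}, K.obj n → Prop
  | 0 => fun _ => True
  | _ + 1 => fun x => K.IsSph b x

lemma basept_isSph (b : K.obj 0) (m : ℕ) : K.IsSph b (K.basept b (m + 1)) :=
  fun i => K.d_basept b m i (Nat.lt_succ_iff.mp i.isLt)

/-- The cycle `(⋆, …, ⋆, y, z, x)` witnessing `[x][y] = [z]` in `π_{m+1}`. -/
def mulTuple (b : K.obj 0) {m : ℕ} (x y z : K.obj (m + 1)) : Fin (m + 3) → K.obj (m + 1) :=
  fun i =>
    if (i : ℕ) < m then K.basept b (m + 1)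
    else if (i : ℕ) = m then y
    else if (i : ℕ) = m + 1 then z
    else x

/-- `z` is a product of `x` and `y` in the sense of the homotopy group `π_{m+1}`. -/
def MulWitness (b : K.obj 0) {m : ℕ} (x y z : K.obj (m + 1)) : Prop :=
  K.IsBoundary (K.mulTuple b x y z)

/-- Spherical `(m+1)`-simplices: the representatives of `π_{m+1}(K,⋆)`. -/
def Sph (b : K.obj 0) (m : ℕ) := {x : K.obj (m + 1) // K.IsSph b x}

/-- The homotopy group `π_{m+1}(K,⋆)` as a quotient set. -/
def piGrp (b : K.obj 0) (m : ℕ) := Quot (fun x y : K.Sph b m => K.Homotopic x.1 y.1)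

/-- The homotopy class of a spherical simplex. -/
def cls (b : K.obj 0) (m : ℕ) (x : K.Sph b m) : K.piGrp b m := Quot.mk _ x

/-- A binary operation on `π_{m+1}(K,⋆)` is induced by horn filling if it sends
classes of `x` and `y` to the class of any product witness `z`. -/
def MulDescends (b : K.obj 0) (m : ℕ) (mul : K.piGrp b m → K.piGrp b m → K.piGrp b m) : Prop :=
  ∀ x y z : K.Sph b m, K.MulWitness b x.1 y.1 z.1 → mul (K.cls b m x) (K.cls b m y) = K.cls b m z

/-- A Kan complex is minimal if homotopic simplices with equal boundaries are equal. -/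
def Minimal : Prop :=
  ∀ (n : ℕ) (x y : K.obj n), K.SameBdry x y → K.Homotopic x y → x = y

end SSetC

/-!
With `c = ∂u`, the cycle `c'` is a boundary iff some `u'` has the faces of `u` except the
`k`-th, which is `y'`; and `y ∼ y'` iff some `h` has the faces of `s_{m+1} y` except the last,
which is `y'`.
A Kan filler exchanges two faces of an `(m+3)`-simplex `w`: for `j ≠ k`, there is a simplex with
the faces of `d_j w` except the one shared with `d_k w` and prescribed there iff there is a
simplex with the faces of `d_k w` except the one shared with `d_j w` and prescribed there.
Applied to `w = s_{m+2} u` (faces `m+3` and `k`) when `k ≤ m+1`, and to `w = s_{m+1} u` (faces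
`m+2` and `m+3`) when `k = m+2`, this turns one condition into the other.
-/

namespace SSetC

variable (K : SSetC)

/-- The position of `i` in `{0, 1, …} \ {k}`, for `i ≠ k`. -/
def dropIdx (k i : ℕ) : ℕ := if i < k then i else i - 1

def FacesEqExcept {n : ℕ} (a : ℕ) (x x' : K.obj (n + 1)) : Prop :=
  ∀ i ≤ n + 1, i ≠ a → K.d n i x = K.d n i x'

variable {K}

lemma d_d_dropIdx {n j k : ℕ} (hj : j ≤ n + 2) (hk : k ≤ n + 2) (hjk : j ≠ k)
    (x : K.obj (n + 2)) :
    K.d n (dropIdx k j) (K.d (n + 1) k x) = K.d n (dropIdx j k) (K.d (n + 1) j x) := by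
  rcases Nat.lt_or_gt_of_ne hjk with h | h
  · simpa [dropIdx, h, Nat.not_lt.mpr h.le] using K.dd n j k h hk x
  · simpa [dropIdx, h, Nat.not_lt.mpr h.le] using (K.dd n k j h hj x).symm

lemma isBoundary_update_bdry_iff {n : ℕ} (x : K.obj (n + 1)) (k : Fin (n + 2)) (t : K.obj n) :
    K.IsBoundary (Function.update (K.bdry x) k t) ↔
      ∃ z, K.FacesEqExcept k z x ∧ K.d n k z = t := by
  constructor
  · rintro ⟨z, hz⟩
    refine ⟨z, fun i hi hik => ?_, by simpa [bdry] using congrFun hz k⟩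
    have hne : (⟨i, by omega⟩ : Fin (n + 2)) ≠ k := fun h => hik (congrArg Fin.val h)
    simpa [hne, bdry] using congrFun hz ⟨i, by omega⟩
  · rintro ⟨z, hzx, rfl⟩
    refine ⟨z, funext fun i => ?_⟩
    by_cases hik : i = k
    · subst hik; simp [bdry]
    · simpa [hik, bdry] using hzx i (by omega) (fun h => hik (Fin.ext h))

lemma homotopyTuple_eq_update {m : ℕ} (x y : K.obj (m + 1)) :
    K.homotopyTuple x y =
      Function.update (K.bdry (K.s (m + 1) (m + 1) x)) (Fin.last (m + 2)) y := by
  funext ⟨i, hi⟩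
  rcases (by omega : i < m + 1 ∨ i = m + 1 ∨ i = m + 2) with h | rfl | rfl
  · have hne : (⟨i, hi⟩ : Fin (m + 3)) ≠ Fin.last (m + 2) := by simp [Fin.ext_iff]; omega
    simp [homotopyTuple, h, hne, bdry, K.ds_lt m i (m + 1) h (by omega)]
  · have hne : (⟨m + 1, hi⟩ : Fin (m + 3)) ≠ Fin.last (m + 2) := by simp [Fin.ext_iff]
    simp [homotopyTuple, hne, bdry, K.ds_self (m + 1) (m + 1) le_rfl]
  · rw [show (⟨m + 2, hi⟩ : Fin (m + 3)) = Fin.last (m + 2) from rfl, Function.update_self]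
    simp [homotopyTuple]

lemma homotopic_iff_exists_facesEqExcept {m : ℕ} (x y : K.obj (m + 1)) :
    K.Homotopic x y ↔
      ∃ h, K.FacesEqExcept (m + 2) h (K.s (m + 1) (m + 1) x) ∧ K.d (m + 1) (m + 2) h = y := by
  rw [Homotopic, homotopyTuple_eq_update, isBoundary_update_bdry_iff, Fin.val_last]

/-- `v` is the `k`-th face of a filler of the horn `∂w` with `z` put in place of its `j`-th entry
and its `k`-th entry left out. -/
lemma exists_facesEqExcept_of_isKan (hK : K.IsKan) {n j k : ℕ} (hj : j ≤ n + 2)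
    (hk : k ≤ n + 2) (hjk : j ≠ k) (w : K.obj (n + 2)) {z : K.obj (n + 1)}
    (hz : K.FacesEqExcept (dropIdx j k) z (K.d (n + 1) j w)) :
    ∃ v, K.FacesEqExcept (dropIdx k j) v (K.d (n + 1) k w) ∧
      K.d n (dropIdx k j) v = K.d n (dropIdx j k) z := by
  let c : Fin (n + 3) → K.obj (n + 1) := fun i => if (i : ℕ) = j then z else K.d (n + 1) i w
  have hc : K.HornCompat k c := by
    intro i l hik hlk hil
    by_cases hl : (l : ℕ) = j
    · have hi : (i : ℕ) ≠ j := by omega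
      have hiz : (i : ℕ) ≠ dropIdx j k := by unfold dropIdx; split_ifs <;> omega
      simp only [c, hl, hi, if_true, if_false]
      rw [hz i (by omega) hiz, K.dd n i j (by omega) hj]
    by_cases hi : (i : ℕ) = j
    · have hlz : (l : ℕ) - 1 ≠ dropIdx j k := by unfold dropIdx; split_ifs <;> omega
      simp only [c, hl, hi, if_true, if_false]
      rw [hz (l - 1) (by omega) hlz, K.dd n j l (by omega) (by omega)]
    · simp only [c, hl, hi, if_false]
      exact K.dd n i l hil (by omega) w
  obtain ⟨W, hW⟩ := hK (n + 1) k (by omega) c hc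
  have hW' : ∀ i ≤ n + 2, i ≠ k → K.d (n + 1) i W = if i = j then z else K.d (n + 1) i w :=
    fun i hi hik => hW ⟨i, by omega⟩ hik
  refine ⟨K.d (n + 1) k W, fun i hi hij => ?_, ?_⟩
  · obtain ⟨i', hi', hi'k, rfl⟩ : ∃ i', i' ≤ n + 2 ∧ i' ≠ k ∧ dropIdx k i' = i :=
      ⟨if i < k then i else i + 1, by unfold dropIdx; split_ifs <;> omega⟩
    have hi'j : i' ≠ j := by rintro rfl; exact hij rfl
    rw [d_d_dropIdx hi' hk hi'k, d_d_dropIdx hi' hk hi'k, hW' i' hi' hi'k, if_neg hi'j]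
  · rw [d_d_dropIdx hj hk hjk, hW' j hj hjk, if_pos rfl]

lemma exists_facesEqExcept_iff_of_isKan (hK : K.IsKan) {n j k : ℕ} (hj : j ≤ n + 2)
    (hk : k ≤ n + 2) (hjk : j ≠ k) (w : K.obj (n + 2)) (t : K.obj n) :
    (∃ z, K.FacesEqExcept (dropIdx j k) z (K.d (n + 1) j w) ∧ K.d n (dropIdx j k) z = t) ↔
      ∃ v, K.FacesEqExcept (dropIdx k j) v (K.d (n + 1) k w) ∧ K.d n (dropIdx k j) v = t := by
  constructor
  · rintro ⟨z, hz, rfl⟩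
    exact exists_facesEqExcept_of_isKan hK hj hk hjk w hz
  · rintro ⟨v, hv, rfl⟩
    exact exists_facesEqExcept_of_isKan hK hk hj hjk.symm w hv

end SSetC

open SSetC in
theorem key_lemma_general (K : SSetC) (hK : K.IsKan) (m : ℕ)
    (c : Fin (m + 3) → K.obj (m + 1)) (hc : K.IsBoundary c)
    (k : Fin (m + 3)) (y' : K.obj (m + 1)) :
    K.IsBoundary (Function.update c k y') ↔ K.Homotopic (c k) y' := by
  obtain ⟨u, rfl⟩ := hc
  rw [isBoundary_update_bdry_iff, homotopic_iff_exists_facesEqExcept]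
  show _ ↔ ∃ h, K.FacesEqExcept (m + 2) h (K.s (m + 1) (m + 1) (K.d (m + 1) k u)) ∧ _
  rcases (by omega : (k : ℕ) < m + 2 ∨ (k : ℕ) = m + 2) with hk | hk
  · have h := exists_facesEqExcept_iff_of_isKan hK (j := m + 3) (k := k) le_rfl (by omega)
      (by omega) (K.s (m + 2) (m + 2) u) y'
    rwa [K.ds_succ (m + 2) (m + 2) le_rfl, K.ds_lt (m + 1) k (m + 2) hk le_rfl,
      show dropIdx (m + 3) k = k by simp [dropIdx],
      show dropIdx k (m + 3) = m + 2 by simp [dropIdx]] at h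
  · have h := exists_facesEqExcept_iff_of_isKan hK (j := m + 2) (k := m + 3) (by omega) le_rfl
      (by omega) (K.s (m + 2) (m + 1) u) y'
    rw [K.ds_succ (m + 2) (m + 1) (by omega), K.ds_gt (m + 1) (m + 3) (m + 1) (by omega) le_rfl,
      show dropIdx (m + 2) (m + 3) = m + 2 by simp [dropIdx],
      show dropIdx (m + 3) (m + 2) = m + 2 by simp [dropIdx]] at h
    rw [hk]
    exact h

open SSetC in
/-- **Key Lemma.** Let `c` be a boundary (of simplices of dimension
`m+1`) in a Kan complex `K`, let `y = c k` be its `k`-th entry, and let `y'` be a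
simplex with `∂y' = ∂y`.  Then the cycle `c'` obtained from `c` by replacing the
`k`-th entry by `y'` is a boundary if and only if `y ∼ y'`. -/
theorem key_lemma (K : SSetC) (hK : K.IsKan) (m : ℕ)
    (c : Fin (m + 3) → K.obj (m + 1)) (hc : K.IsBoundary c)
    (k : Fin (m + 3)) (y' : K.obj (m + 1))
    (hby : K.bdry y' = K.bdry (c k)) :
    K.IsBoundary (Function.update c k y') ↔ K.Homotopic (c k) y' :=
  key_lemma_general K hK m c hc k y'
end

section
/- (Relative Key Lemma) Let (K,L) be a pair of Kan complexes with L a subcomplex of K. Let b = (l, x_1,…,x_n) be an (n-1)-boundary in K with l ∈ L_{n-1}, let 1 ≤ k ≤ n, and let x_k' ∈ K_{n-1} satisfy d_i x_k = d_i x_k' for 1 ≤ i ≤ n-1 and d_0 x_k, d_0 x_k' ∈ L_{n-2}. Then there exists l' ∈ L_{n-1} such that b' = (l', x_1,…,x_{k-1}, x_k', x_{k+1},…, x_n) is an (n-1)-boundary in K if and only if x_k is homotopic to x_k' relative L. -/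
namespace SSetC

variable (K : SSetC)

/-- A subcomplex of a simplicial set: a family of subsets closed under the
face and degeneracy operators. -/
structure Subcomplex (K : SSetC) where
  mem : ∀ n, Set (K.obj n)
  d_mem : ∀ (n i : ℕ), i ≤ n + 1 → ∀ x ∈ mem (n + 1), K.d n i x ∈ mem n
  s_mem : ∀ (n i : ℕ), i ≤ n → ∀ x ∈ mem n, K.s n i x ∈ mem (n + 1)

/-- The subcomplex `L` is itself a Kan complex: every horn with entries in `L`
has a filling lying in `L`. -/
def Subcomplex.IsKan {K : SSetC} (L : Subcomplex K) : Prop :=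
  ∀ (m k : ℕ), k ≤ m + 1 → ∀ c : Fin (m + 2) → K.obj m,
    (∀ i : Fin (m + 2), (i : ℕ) ≠ k → c i ∈ L.mem m) → K.HornCompat k c →
    ∃ x : K.obj (m + 1), x ∈ L.mem (m + 1) ∧ ∀ i : Fin (m + 2), (i : ℕ) ≠ k → K.d m i x = c i

/-- A tuple of `m`-simplices lying in a subcomplex is a boundary in the subcomplex
if it is the boundary of a simplex of the subcomplex. -/
def IsBoundaryIn (L : Subcomplex K) {m : ℕ} (c : Fin (m + 2) → K.obj m) : Prop :=
  ∃ x ∈ L.mem (m + 1), K.bdry x = c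

/-- Homotopy of simplices realized inside a subcomplex. -/
def HomotopicIn (L : Subcomplex K) {n : ℕ} (x y : K.obj n) : Prop :=
  K.IsBoundaryIn L (K.homotopyTuple x y)

/-- The cycle `(h_L, s_m d_1 x, …, s_m d_m x, x, y)` used to define relative homotopy. -/
def relTuple {m : ℕ} (hL x y : K.obj (m + 1)) : Fin (m + 3) → K.obj (m + 1) :=
  fun i =>
    if (i : ℕ) = 0 then hL
    else if (i : ℕ) < m + 1 then K.s m m (K.d m i x)
    else if (i : ℕ) = m + 1 then x
    else y

/-- Two `(m+1)`-simplices are homotopic relative to a subcomplex `L`. -/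
def HomotopicRel (L : Subcomplex K) {m : ℕ} (x y : K.obj (m + 1)) : Prop :=
  (∀ i : ℕ, 1 ≤ i → i ≤ m + 1 → K.d m i x = K.d m i y) ∧
  K.d m 0 x ∈ L.mem m ∧ K.d m 0 y ∈ L.mem m ∧
  ∃ hL ∈ L.mem (m + 1), K.IsBoundary (K.relTuple hL x y)

/-- Representatives of the relative homotopy group `π_{m+1}(K,L,⋆)`:
`∂x = (l, ⋆, …, ⋆)` with `l ∈ L`. -/
def IsRelSph (L : Subcomplex K) (b : K.obj 0) {m : ℕ} (x : K.obj (m + 1)) : Prop :=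
  K.d m 0 x ∈ L.mem m ∧ ∀ i : Fin (m + 2), 1 ≤ (i : ℕ) → K.d m i x = K.basept b m

def RelSph (L : Subcomplex K) (b : K.obj 0) (m : ℕ) := {x : K.obj (m + 1) // K.IsRelSph L b x}

/-- The relative homotopy group `π_{m+1}(K,L,⋆)` as a quotient set. -/
def piRel (L : Subcomplex K) (b : K.obj 0) (m : ℕ) :=
  Quot (fun x y : K.RelSph L b m => K.HomotopicRel L x.1 y.1)

def relCls (L : Subcomplex K) (b : K.obj 0) (m : ℕ) (x : K.RelSph L b m) : K.piRel L b m :=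
  Quot.mk _ x

/-- The cycle `(h, ⋆, …, ⋆, y, z, x)` (with `h ∈ L`) witnessing `[x][y] = [z]` in
the relative homotopy group `π_{m+2}(K,L,⋆)`. -/
def relMulTuple (b : K.obj 0) {m : ℕ} (h x y z : K.obj (m + 2)) : Fin (m + 4) → K.obj (m + 2) :=
  fun i =>
    if (i : ℕ) = 0 then h
    else if (i : ℕ) < m + 1 then K.basept b (m + 2)
    else if (i : ℕ) = m + 1 then y
    else if (i : ℕ) = m + 2 then z
    else x

def RelMulWitness (L : Subcomplex K) (b : K.obj 0) {m : ℕ} (x y z : K.obj (m + 2)) : Prop :=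
  ∃ h ∈ L.mem (m + 2), K.IsBoundary (K.relMulTuple b h x y z)

def RelMulDescends (L : Subcomplex K) (b : K.obj 0) (m : ℕ)
    (mul : K.piRel L b (m + 1) → K.piRel L b (m + 1) → K.piRel L b (m + 1)) : Prop :=
  ∀ x y z : K.RelSph L b (m + 1), K.RelMulWitness L b x.1 y.1 z.1 →
    mul (K.relCls L b (m + 1) x) (K.relCls L b (m + 1) y) = K.relCls L b (m + 1) z

/-- The subcomplex generated by a base point. -/
def ptSub (b : K.obj 0) : Subcomplex K where
  mem n := {x | x = K.basept b n}
  d_mem n i hi x hx := by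
    simp only [Set.mem_setOf_eq] at *
    rw [hx]; exact K.d_basept b n i hi
  s_mem n i hi x hx := by
    simp only [Set.mem_setOf_eq] at *
    rw [hx]; exact K.s_basept b n i hi

/-- The full subcomplex. -/
def topSub : Subcomplex K where
  mem _ := Set.univ
  d_mem _ _ _ _ _ := trivial
  s_mem _ _ _ _ _ := trivial

/-- The empty subcomplex. -/
def botSub : Subcomplex K where
  mem _ := ∅
  d_mem _ _ _ _ h := h.elim
  s_mem _ _ _ _ h := h.elim

/-- A simplicial map between simplicial sets. -/
structure SMap (K L : SSetC) where
  app : ∀ n, K.obj n → L.obj n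
  comm_d : ∀ (n i : ℕ), i ≤ n + 1 → ∀ x : K.obj (n + 1), app n (K.d n i x) = L.d n i (app (n + 1) x)
  comm_s : ∀ (n i : ℕ), i ≤ n → ∀ x : K.obj n, app (n + 1) (K.s n i x) = L.s n i (app n x)

/-- The identity simplicial map. -/
def SMap.idMap (K : SSetC) : SMap K K :=
  ⟨fun _ x => x, fun _ _ _ _ => rfl, fun _ _ _ _ => rfl⟩

/-- Composition of simplicial maps. -/
def SMap.comp {K L M : SSetC} (f : SMap K L) (g : SMap L M) : SMap K M where
  app n x := g.app n (f.app n x)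
  comm_d n i hi x := by rw [f.comm_d n i hi, g.comm_d n i hi]
  comm_s n i hi x := by rw [f.comm_s n i hi, g.comm_s n i hi]

lemma SMap.basept_app {K L : SSetC} (f : SMap K L) (b : K.obj 0) :
    ∀ n, f.app n (K.basept b n) = L.basept (f.app 0 b) n := by
  intro n
  induction n with
  | zero => rfl
  | succ n ih =>
    have h1 : K.basept b (n + 1) = K.s n 0 (K.basept b n) := rfl
    rw [h1, f.comm_s n 0 (Nat.zero_le _), ih]
    rfl

/-- The product of two simplicial sets. -/
def prodSSet (K L : SSetC) : SSetC where
  obj n := K.obj n × L.obj n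
  d n i x := (K.d n i x.1, L.d n i x.2)
  s n i x := (K.s n i x.1, L.s n i x.2)
  dd n i j h1 h2 x := Prod.ext (K.dd n i j h1 h2 x.1) (L.dd n i j h1 h2 x.2)
  ss n i j h1 h2 x := Prod.ext (K.ss n i j h1 h2 x.1) (L.ss n i j h1 h2 x.2)
  ds_lt n i j h1 h2 x := Prod.ext (K.ds_lt n i j h1 h2 x.1) (L.ds_lt n i j h1 h2 x.2)
  ds_self n i h x := Prod.ext (K.ds_self n i h x.1) (L.ds_self n i h x.2)
  ds_succ n i h x := Prod.ext (K.ds_succ n i h x.1) (L.ds_succ n i h x.2)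
  ds_gt n i j h1 h2 x := Prod.ext (K.ds_gt n i j h1 h2 x.1) (L.ds_gt n i j h1 h2 x.2)

/-- The product of a family of simplicial sets. -/
def piSSet {I : Type} (F : I → SSetC) : SSetC where
  obj n := ∀ i, (F i).obj n
  d n j x := fun i => (F i).d n j (x i)
  s n j x := fun i => (F i).s n j (x i)
  dd n i j h1 h2 x := funext fun a => (F a).dd n i j h1 h2 (x a)
  ss n i j h1 h2 x := funext fun a => (F a).ss n i j h1 h2 (x a)
  ds_lt n i j h1 h2 x := funext fun a => (F a).ds_lt n i j h1 h2 (x a)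
  ds_self n i h x := funext fun a => (F a).ds_self n i h (x a)
  ds_succ n i h x := funext fun a => (F a).ds_succ n i h (x a)
  ds_gt n i j h1 h2 x := funext fun a => (F a).ds_gt n i j h1 h2 (x a)

/-- The coproduct (disjoint union) of a family of simplicial sets. -/
def sigmaSSet {I : Type} (F : I → SSetC) : SSetC where
  obj n := Σ i, (F i).obj n
  d n j x := ⟨x.1, (F x.1).d n j x.2⟩
  s n j x := ⟨x.1, (F x.1).s n j x.2⟩
  dd n i j h1 h2 x := congrArg (Sigma.mk x.1) ((F x.1).dd n i j h1 h2 x.2)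
  ss n i j h1 h2 x := congrArg (Sigma.mk x.1) ((F x.1).ss n i j h1 h2 x.2)
  ds_lt n i j h1 h2 x := congrArg (Sigma.mk x.1) ((F x.1).ds_lt n i j h1 h2 x.2)
  ds_self n i h x := congrArg (Sigma.mk x.1) ((F x.1).ds_self n i h x.2)
  ds_succ n i h x := congrArg (Sigma.mk x.1) ((F x.1).ds_succ n i h x.2)
  ds_gt n i j h1 h2 x := congrArg (Sigma.mk x.1) ((F x.1).ds_gt n i j h1 h2 x.2)

/-- The one-point simplicial set. -/
def ptSSet : SSetC where
  obj _ := PUnit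
  d _ _ _ := PUnit.unit
  s _ _ _ := PUnit.unit
  dd _ _ _ _ _ _ := rfl
  ss _ _ _ _ _ _ := rfl
  ds_lt _ _ _ _ _ _ := rfl
  ds_self _ _ _ _ := rfl
  ds_succ _ _ _ _ := rfl
  ds_gt _ _ _ _ _ _ := rfl

/-- The standard `1`-simplex `Δ¹`: an `n`-simplex is a monotone map `[n] → [1]`,
encoded by the number `k ∈ {0, …, n+1}` of vertices sent to `0`. -/
def deltaOne : SSetC where
  obj n := Fin (n + 2)
  d n i k := ⟨if i < (k : ℕ) then (k : ℕ) - 1 else min (k : ℕ) (n + 1), by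
    have := k.isLt; split_ifs <;> omega⟩
  s n i k := ⟨if i < (k : ℕ) then (k : ℕ) + 1 else (k : ℕ), by
    have := k.isLt; split_ifs <;> omega⟩
  dd := by
    intro n i j h1 h2 x
    apply Fin.ext
    have := x.isLt
    simp only []
    split_ifs <;> omega
  ss := by
    intro n i j h1 h2 x
    apply Fin.ext
    have := x.isLt
    simp only []
    split_ifs <;> omega
  ds_lt := by
    intro n i j h1 h2 x
    apply Fin.ext
    have := x.isLt
    simp only []
    split_ifs <;> omega
  ds_self := by
    intro n i h x
    apply Fin.ext
    have := x.isLt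
    simp only []
    split_ifs <;> omega
  ds_succ := by
    intro n i h x
    apply Fin.ext
    have := x.isLt
    simp only []
    split_ifs <;> omega
  ds_gt := by
    intro n i j h1 h2 x
    apply Fin.ext
    have := x.isLt
    simp only []
    split_ifs <;> omega

/-- The `0`-end of `Δ¹` in dimension `n` (all vertices sent to `0`). -/
def vertexZero (n : ℕ) : Fin (n + 2) := ⟨n + 1, by omega⟩

/-- The `1`-end of `Δ¹` in dimension `n` (all vertices sent to `1`). -/
def vertexOne (n : ℕ) : Fin (n + 2) := ⟨0, by omega⟩

end SSetC

/-! Let `w` fill `c`. Both directions build the same two simplices: a cap `V` in `L` whose faces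
are degeneracies of faces of `c_0`, `c_0` itself, `l'` and `h`, and a prism `U` in `K` whose faces
are `V`, degeneracies of the `c_i`, `w`, the exchanged simplex `w'` and the relative homotopy `H`.
Given `w'` one fills the cap at `h` and then the prism at `H`; given `H` one fills the cap at `l'`
and then the prism at `w'`. Each filling is of a horn whose faces have prescribed, mutually
compatible boundaries, so the new face acquires the boundary the remaining ones dictate; all
verification reduces to the simplicial identities on a table of second faces. Where the
degeneracies sit depends on whether `k ≤ m + 1` or `k = m + 2`. -/

namespace SSetC

variable {K : SSetC} {m : ℕ}

def HasFaces (x : K.obj (m + 1)) (f : ℕ → K.obj m) : Prop :=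
  ∀ p ≤ m + 1, K.d m p x = f p

/-- `B p i` prescribes the `i`-th face of the `p`-th entry of a tuple; compatibility is the
simplicial identity `d_i d_p = d_{p-1} d_i` for `i < p`. -/
def FaceCompat {α : Type*} (n : ℕ) (B : ℕ → ℕ → α) : Prop :=
  ∀ i p, i < p → p ≤ n → B p i = B i (p - 1)

lemma bdry_eq_iff_hasFaces {x : K.obj (m + 1)} {f : ℕ → K.obj m} :
    K.bdry x = (fun i : Fin (m + 2) => f i) ↔ HasFaces x f :=
  ⟨fun h p hp => congrFun h (⟨p, by omega⟩ : Fin (m + 2)),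
    fun h => funext fun i => h i (by omega)⟩

lemma HasFaces.faceCompat {x : K.obj (m + 2)} {f : ℕ → K.obj (m + 1)} (hx : HasFaces x f) :
    FaceCompat (m + 2) (fun p i => K.d m i (f p)) := by
  intro i p hip hp
  dsimp only
  rw [← hx p hp, ← hx i (by omega), K.dd m i p hip hp]

lemma hasFaces_d_of_horn {j : ℕ} (hj : j ≤ m + 2) {t : ℕ → K.obj (m + 1)}
    {B : ℕ → ℕ → K.obj m}
    (hB : FaceCompat (m + 2) B) (ht : ∀ p ≤ m + 2, p ≠ j → HasFaces (t p) (B p))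
    {x : K.obj (m + 2)} (hx : ∀ p ≤ m + 2, p ≠ j → K.d (m + 1) p x = t p) :
    HasFaces (K.d (m + 1) j x) (B j) := by
  intro i hi
  rcases lt_or_ge i j with hij | hij
  · rw [K.dd m i j hij hj, hx i (by omega) hij.ne, ht i (by omega) hij.ne (j - 1) (by omega),
      hB i j hij hj]
  · have h := K.dd m j (i + 1) (by omega) (by omega) x
    rw [Nat.add_sub_cancel] at h
    rw [← h, hx (i + 1) (by omega) (by omega), ht (i + 1) (by omega) (by omega) j (by omega),
      hB j (i + 1) (by omega) (by omega), Nat.add_sub_cancel]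

lemma hornCompat_of_faceCompat {j : ℕ} {t : ℕ → K.obj (m + 1)} {B : ℕ → ℕ → K.obj m}
    (hB : FaceCompat (m + 2) B) (ht : ∀ p ≤ m + 2, p ≠ j → HasFaces (t p) (B p)) :
    K.HornCompat j (fun p : Fin (m + 3) => t p) := by
  intro i p hij hpj hip
  rw [ht p (by omega) hpj i (by omega), ht i (by omega) hij (p - 1) (by omega),
    hB i p hip (by omega)]

lemma IsKan.exists_fill (hK : K.IsKan) {j : ℕ} (hj : j ≤ m + 2) {t : ℕ → K.obj (m + 1)}
    {B : ℕ → ℕ → K.obj m} (hB : FaceCompat (m + 2) B)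
    (ht : ∀ p ≤ m + 2, p ≠ j → HasFaces (t p) (B p)) :
    ∃ x : K.obj (m + 2), (∀ p ≤ m + 2, p ≠ j → K.d (m + 1) p x = t p) ∧
      HasFaces (K.d (m + 1) j x) (B j) := by
  obtain ⟨x, hx⟩ := hK (m + 1) j hj _ (hornCompat_of_faceCompat hB ht)
  have hx' : ∀ p ≤ m + 2, p ≠ j → K.d (m + 1) p x = t p :=
    fun p hp hpj => hx ⟨p, by omega⟩ hpj
  exact ⟨x, hx', hasFaces_d_of_horn hj hB ht hx'⟩

lemma Subcomplex.IsKan.exists_fill {L : Subcomplex K} (hL : L.IsKan) {j : ℕ} (hj : j ≤ m + 2)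
    {t : ℕ → K.obj (m + 1)} {B : ℕ → ℕ → K.obj m} (hB : FaceCompat (m + 2) B)
    (ht : ∀ p ≤ m + 2, p ≠ j → HasFaces (t p) (B p))
    (htL : ∀ p ≤ m + 2, p ≠ j → t p ∈ L.mem (m + 1)) :
    ∃ x ∈ L.mem (m + 2), (∀ p ≤ m + 2, p ≠ j → K.d (m + 1) p x = t p) ∧
      HasFaces (K.d (m + 1) j x) (B j) := by
  obtain ⟨x, hxL, hx⟩ := hL (m + 1) j hj _ (fun p hpj => htL p (by omega) hpj)
    (hornCompat_of_faceCompat hB ht)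
  have hx' : ∀ p ≤ m + 2, p ≠ j → K.d (m + 1) p x = t p :=
    fun p hp hpj => hx ⟨p, by omega⟩ hpj
  exact ⟨x, hxL, hx', hasFaces_d_of_horn hj hB ht hx'⟩

lemma HasFaces.of_horn {x : K.obj (m + 1)} {j : ℕ} {f g : ℕ → K.obj m}
    (hx : ∀ p ≤ m + 1, p ≠ j → K.d m p x = f p)
    (hfg : ∀ p ≤ m + 1, p ≠ j → f p = g p)
    (hj : K.d m j x = g j) : HasFaces x g := by
  intro p hp
  by_cases hpj : p = j
  · rw [hpj, hj]
  · rw [hx p hp hpj, hfg p hp hpj]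

def relFaces (h x y : K.obj (m + 1)) (p : ℕ) : K.obj (m + 1) :=
  if p = 0 then h else if p < m + 1 then K.s m m (K.d m p x) else if p = m + 1 then x else y

def exchangeFaces (c : ℕ → K.obj (m + 1)) (k : ℕ) (x l : K.obj (m + 1)) (p : ℕ) :
    K.obj (m + 1) :=
  if p = 0 then l else if p = k then x else c p

@[simp] lemma relFaces_zero (h x y : K.obj (m + 1)) : relFaces h x y 0 = h := if_pos rfl

@[simp] lemma exchangeFaces_zero (c : ℕ → K.obj (m + 1)) (k : ℕ) (x l : K.obj (m + 1)) :
    exchangeFaces c k x l 0 = l := if_pos rfl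

def sLastFaces (y : K.obj (m + 1)) (i : ℕ) : K.obj (m + 1) :=
  if i ≤ m then K.s m m (K.d m i y) else y

-- `m - 1` occurs only for `i < m`, so it does not truncate; likewise in `capFacesTop`.
def sPenultFaces (y : K.obj (m + 1)) (i : ℕ) : K.obj (m + 1) :=
  if i < m then K.s m (m - 1) (K.d m i y) else if i ≤ m + 1 then y else K.s m m (K.d m (m + 1) y)

lemma hasFaces_s_last (y : K.obj (m + 1)) : HasFaces (K.s (m + 1) (m + 1) y) (sLastFaces y) := by
  intro i hi
  unfold sLastFaces
  split_ifs with him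
  · exact K.ds_lt m i (m + 1) (by omega) le_rfl y
  · obtain rfl | rfl : i = m + 1 ∨ i = m + 2 := by omega
    exacts [K.ds_self _ _ le_rfl y, K.ds_succ _ _ le_rfl y]

lemma hasFaces_s_penult (y : K.obj (m + 1)) : HasFaces (K.s (m + 1) m y) (sPenultFaces y) := by
  intro i hi
  unfold sPenultFaces
  split_ifs with him him'
  · exact K.ds_lt m i m him (by omega) y
  · obtain rfl | rfl : i = m ∨ i = m + 1 := by omega
    exacts [K.ds_self _ _ (by omega) y, K.ds_succ _ _ (by omega) y]
  · obtain rfl : i = m + 2 := by omega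
    exact K.ds_gt m (m + 2) m (by omega) le_rfl y

lemma d_s_d_comm {q j t : ℕ} (hqj : q < j) (hjt : j ≤ t) (ht : t ≤ m) (z : K.obj (m + 1)) :
    K.d m q (K.s m t (K.d m j z)) = K.d m (j - 1) (K.s m t (K.d m q z)) := by
  obtain ⟨n, rfl⟩ : ∃ n, m = n + 1 := ⟨m - 1, by omega⟩
  rw [K.ds_lt n q t (by omega) (by omega), K.ds_lt n (j - 1) t (by omega) (by omega),
    K.dd n q j hqj (by omega)]

lemma d_s_d_last {q : ℕ} (hq : q < m) (z : K.obj (m + 1)) :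
    K.d m q (K.s m m (K.d m (m + 1) z)) = K.d m (m + 1) (K.s m (m - 1) (K.d m q z)) := by
  obtain ⟨n, rfl⟩ : ∃ n, m = n + 1 := ⟨m - 1, by omega⟩
  simp only [Nat.add_sub_cancel]
  show _ = K.d (n + 1) (n + 2) (K.s (n + 1) n (K.d (n + 1) q z))
  rw [K.ds_lt n q (n + 1) hq le_rfl, K.ds_gt n (n + 2) n (by omega) le_rfl,
    K.dd n q (n + 2) (by omega) (by omega)]
  simp only [Nat.add_sub_cancel]

variable (c : ℕ → K.obj (m + 1)) (k : ℕ) (x' : K.obj (m + 1))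

/-- The boundary of `l' = d_0 w'` when `∂w' = (l', c_1, …, x', …, c_{m+2})`, in terms of `c`
and `x'`. -/
def zeroFaceBdry (q : ℕ) : K.obj m :=
  if q + 1 = k then K.d m 0 x' else K.d m q (c 0)

/-- The boundary of `h = d_0 H` when `∂H = relTuple h (c k) x'`, in terms of `c`, `x'`. -/
def relZeroFaceBdry (q : ℕ) : K.obj m :=
  if q = m + 1 then K.d m 0 x' else K.d m q (K.s m m (K.d m (k - 1) (c 0)))

variable {c k x'}

lemma hasFaces_zeroFaceBdry (hc : FaceCompat (m + 2) (fun p i => K.d m i (c p)))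
    {l' : K.obj (m + 1)} {w' : K.obj (m + 2)}
    (hw' : HasFaces w' (exchangeFaces c k x' l')) : HasFaces l' (zeroFaceBdry c k x') := by
  intro q hq
  have h := K.dd m 0 (q + 1) (by omega) (by omega) w'
  rw [Nat.add_sub_cancel, hw' 0 (by omega), hw' (q + 1) (by omega), exchangeFaces_zero] at h
  rw [← h, zeroFaceBdry, exchangeFaces, if_neg (by omega)]
  split_ifs
  · rfl
  · exact hc 0 (q + 1) (by omega) (by omega)

lemma hasFaces_relZeroFaceBdry (hc : FaceCompat (m + 2) (fun p i => K.d m i (c p)))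
    (hk1 : 1 ≤ k) (hk2 : k ≤ m + 2) {h : K.obj (m + 1)} {H : K.obj (m + 2)}
    (hH : HasFaces H (relFaces h (c k) x')) : HasFaces h (relZeroFaceBdry c k x') := by
  intro q hq
  have e := K.dd m 0 (q + 1) (by omega) (by omega) H
  rw [Nat.add_sub_cancel, hH 0 (by omega), hH (q + 1) (by omega), relFaces_zero] at e
  have hck : K.d m 0 (c k) = K.d m (k - 1) (c 0) := hc 0 k (by omega) hk2
  rw [← e, relFaces, relZeroFaceBdry, if_neg (by omega)]
  obtain hqm | hqm | hqm : q < m ∨ q = m ∨ q = m + 1 := by omega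
  · obtain ⟨n, rfl⟩ : ∃ n, m = n + 1 := ⟨m - 1, by omega⟩
    rw [if_pos (by omega), if_neg (by omega), K.ds_lt n 0 (n + 1) (by omega) le_rfl,
      K.ds_lt n q (n + 1) hqm le_rfl, K.dd n 0 (q + 1) (by omega) (by omega), hck]
    simp only [Nat.add_sub_cancel]
  · subst q
    rw [if_neg (by omega), if_pos rfl, if_neg (by omega), K.ds_self m m le_rfl, hck]
  · subst q
    rw [if_neg (by omega), if_neg (by omega), if_pos rfl]

variable (c k x')

/-! For `1 ≤ k ≤ m + 1` the cap `V ∈ L_{m+2}` has faces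
`(s_m d_0 c_0, …, s_m d_m c_0, c_0, l')` with `h` in position `k - 1`, and the prism
`U ∈ K_{m+3}` has faces `(V, s_{m+1} c_1, …, s_{m+1} c_{m+1}, w, w')` with `H` in position `k`.
`capBdry i` and `prismBdry p` are the boundaries of the `i`-th face of `V` and the `p`-th of `U`. -/

def capFaces (h l' : K.obj (m + 1)) (i : ℕ) : K.obj (m + 1) :=
  if i = k - 1 then h else if i ≤ m then K.s m m (K.d m i (c 0))
  else if i = m + 1 then c 0 else l'

def capBdry (i q : ℕ) : K.obj m :=
  if i = k - 1 then relZeroFaceBdry c k x' q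
  else if i ≤ m then K.d m q (K.s m m (K.d m i (c 0)))
  else if i = m + 1 then K.d m q (c 0) else zeroFaceBdry c k x' q

def prismBdry (h l' : K.obj (m + 1)) (p i : ℕ) : K.obj (m + 1) :=
  if p = 0 then capFaces c k h l' i else if p = k then relFaces h (c k) x' i
  else if p ≤ m + 1 then sLastFaces (c p) i else if p = m + 2 then c i
  else exchangeFaces c k x' l' i

variable {c k x'}

@[simp] lemma capFaces_hole (h l' : K.obj (m + 1)) : capFaces c k h l' (k - 1) = h := if_pos rfl

lemma capFaces_last (hk : k ≤ m + 1) (h l' : K.obj (m + 1)) : capFaces c k h l' (m + 2) = l' := by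
  rw [capFaces, if_neg (by omega), if_neg (by omega), if_neg (by omega)]

lemma capBdry_hole : capBdry c k x' (k - 1) = relZeroFaceBdry c k x' :=
  funext fun _ => if_pos rfl

lemma capBdry_last (hk : k ≤ m + 1) : capBdry c k x' (m + 2) = zeroFaceBdry c k x' := by
  funext q
  rw [capBdry, if_neg (by omega), if_neg (by omega), if_neg (by omega)]

lemma capBdry_of_le {i q : ℕ} (hi : i ≤ m) (hq : q ≤ m) :
    capBdry c k x' i q = K.d m q (K.s m m (K.d m i (c 0))) := by
  unfold capBdry relZeroFaceBdry
  split_ifs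
  · omega
  · subst i; rfl
  · rfl

lemma faceCompat_capBdry (hk1 : 1 ≤ k) (hk2 : k ≤ m + 1) :
    FaceCompat (m + 2) (capBdry c k x') := by
  intro q j hqj hj
  obtain hjm | rfl | rfl : j ≤ m ∨ j = m + 1 ∨ j = m + 2 := by omega
  · rw [capBdry_of_le hjm (by omega), capBdry_of_le (by omega) (by omega)]
    exact d_s_d_comm hqj hjm le_rfl _
  · rw [Nat.add_sub_cancel, capBdry_of_le (by omega) le_rfl, K.ds_self m m le_rfl, capBdry,
      if_neg (by omega), if_neg (by omega), if_pos rfl]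
  · rw [show m + 2 - 1 = m + 1 by omega, capBdry, if_neg (by omega), if_neg (by omega),
      if_neg (by omega), zeroFaceBdry, capBdry]
    by_cases hqk : q = k - 1
    · rw [if_pos (by omega), if_pos hqk, relZeroFaceBdry, if_pos rfl]
    obtain hqm | rfl : q ≤ m ∨ q = m + 1 := by omega
    · rw [if_neg (by omega), if_neg hqk, if_pos hqm, K.ds_succ m m le_rfl]
    · rw [if_neg (by omega), if_neg hqk, if_neg (by omega), if_pos rfl]

variable {h l' : K.obj (m + 1)}

@[simp] lemma prismBdry_zero : prismBdry c k x' h l' 0 = capFaces c k h l' :=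
  funext fun _ => if_pos rfl

lemma prismBdry_self (hk : 1 ≤ k) : prismBdry c k x' h l' k = relFaces h (c k) x' := by
  funext i
  rw [prismBdry, if_neg (by omega), if_pos rfl]

lemma prismBdry_of_ne {p : ℕ} (hp1 : 1 ≤ p) (hp : p ≤ m + 1) (hpk : p ≠ k) :
    prismBdry c k x' h l' p = sLastFaces (c p) := by
  funext i
  rw [prismBdry, if_neg (by omega), if_neg hpk, if_pos hp]

lemma prismBdry_prev_last (hk : k ≤ m + 1) : prismBdry c k x' h l' (m + 2) = c := by
  funext i
  rw [prismBdry, if_neg (by omega), if_neg (by omega), if_neg (by omega), if_pos rfl]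

lemma prismBdry_last (hk : k ≤ m + 1) :
    prismBdry c k x' h l' (m + 3) = exchangeFaces c k x' l' := by
  funext i
  rw [prismBdry, if_neg (by omega), if_neg (by omega), if_neg (by omega), if_neg (by omega)]

lemma prismBdry_of_mid {p : ℕ} (hp1 : 1 ≤ p) (hp : p ≤ m + 1) (i : ℕ) :
    prismBdry c k x' h l' p i =
      if i = 0 ∧ p = k then h else if i ≤ m then K.s m m (K.d m i (c p))
      else if i = m + 1 then c p else if p = k then x' else c p := by
  unfold prismBdry relFaces sLastFaces
  rw [if_neg (by omega)]
  by_cases hpk : p = k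
  · subst hpk
    simp only [if_true, and_true]
    split_ifs <;> first | omega | rfl
  · simp only [if_neg hpk, if_pos hp]
    split_ifs <;> first | omega | rfl

lemma faceCompat_prismBdry (hc : FaceCompat (m + 2) (fun p i => K.d m i (c p)))
    (hk1 : 1 ≤ k) (hk2 : k ≤ m + 1) : FaceCompat (m + 3) (prismBdry c k x' h l') := by
  intro i p hip hp
  obtain hpm | rfl | rfl : p ≤ m + 1 ∨ p = m + 2 ∨ p = m + 3 := by omega
  · rw [prismBdry_of_mid (by omega) hpm]
    rcases Nat.eq_zero_or_pos i with rfl | hi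
    · rw [prismBdry_zero, capFaces]
      by_cases hpk : p = k
      · rw [if_pos ⟨rfl, hpk⟩, if_pos (by omega)]
      · rw [if_neg (by omega), if_pos (by omega), if_neg (by omega), if_pos (by omega)]
        exact congrArg _ (hc 0 p hip (by omega))
    · rw [prismBdry_of_mid hi (by omega), if_neg (by omega), if_pos (by omega), if_neg (by omega),
        if_pos (by omega)]
      exact congrArg _ (hc i p hip (by omega))
  · rw [prismBdry_prev_last hk2, show m + 2 - 1 = m + 1 by omega]
    rcases Nat.eq_zero_or_pos i with rfl | hi
    · rw [prismBdry_zero, capFaces, if_neg (by omega), if_neg (by omega), if_pos rfl]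
    · rw [prismBdry_of_mid hi (by omega), if_neg (by omega), if_neg (by omega), if_pos rfl]
  · rw [prismBdry_last hk2, show m + 3 - 1 = m + 2 by omega, exchangeFaces]
    rcases Nat.eq_zero_or_pos i with rfl | hi
    · rw [prismBdry_zero, capFaces, if_pos rfl, if_neg (by omega), if_neg (by omega),
        if_neg (by omega)]
    obtain him | rfl : i ≤ m + 1 ∨ i = m + 2 := by omega
    · simp only [prismBdry_of_mid hi him, show i ≠ 0 by omega, show m + 2 ≠ 0 by omega,
        show ¬m + 2 ≤ m by omega, show m + 2 ≠ m + 1 by omega, false_and, if_false]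
    · rw [prismBdry_prev_last hk2, if_neg (by omega), if_neg (by omega)]

lemma hasFaces_capFaces {p : ℕ} (hp : p ≤ m + 1) (hpk : p ≠ k - 1) :
    HasFaces (capFaces c k h l' p) (capBdry c k x' p) := by
  intro q hq
  unfold capFaces capBdry
  rw [if_neg hpk, if_neg hpk]
  split_ifs <;> first | rfl | omega

lemma capFaces_mem {L : Subcomplex K} (hc0 : c 0 ∈ L.mem (m + 1)) (hh : h ∈ L.mem (m + 1))
    (hl' : l' ∈ L.mem (m + 1)) (p : ℕ) : capFaces c k h l' p ∈ L.mem (m + 1) := by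
  unfold capFaces
  split_ifs with _ hpm
  exacts [hh, L.s_mem m m le_rfl _ (L.d_mem m p (by omega) _ hc0), hc0, hl']

lemma exists_relFaces_of_exchange (hK : K.IsKan) {L : Subcomplex K} (hL : L.IsKan)
    {w : K.obj (m + 2)} (hw : HasFaces w c) (hc0 : c 0 ∈ L.mem (m + 1))
    (hk1 : 1 ≤ k) (hk2 : k ≤ m + 1) (hl' : l' ∈ L.mem (m + 1))
    {w' : K.obj (m + 2)} (hw' : HasFaces w' (exchangeFaces c k x' l')) :
    ∃ h ∈ L.mem (m + 1), ∃ H : K.obj (m + 2), HasFaces H (relFaces h (c k) x') := by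
  have hc := hw.faceCompat
  obtain ⟨V, hVL, hV, -⟩ := hL.exists_fill (t := capFaces c k l' l') (B := capBdry c k x')
    (j := k - 1) (by omega) (faceCompat_capBdry hk1 hk2)
    (fun p hp hpk => by
      obtain hpm | rfl : p ≤ m + 1 ∨ p = m + 2 := by omega
      · exact hasFaces_capFaces hpm hpk
      · rw [capFaces_last hk2, capBdry_last hk2]
        exact hasFaces_zeroFaceBdry hc hw')
    (fun p _ _ => capFaces_mem hc0 hl' hl' p)
  set h := K.d (m + 1) (k - 1) V
  have hVf : HasFaces V (capFaces c k h l') :=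
    .of_horn hV (fun p _ hpk => by simp only [capFaces, if_neg hpk]) (capFaces_hole h l').symm
  obtain ⟨U, -, hH⟩ := hK.exists_fill (j := k) (B := prismBdry c k x' h l')
    (t := fun p => if p = 0 then V else if p ≤ m + 1 then K.s (m + 1) (m + 1) (c p)
      else if p = m + 2 then w else w') (by omega) (faceCompat_prismBdry hc hk1 hk2)
    (fun p hp hpk => by
      obtain rfl | hpm | rfl | rfl :
          p = 0 ∨ (1 ≤ p ∧ p ≤ m + 1) ∨ p = m + 2 ∨ p = m + 3 := by omega
      · simpa using hVf
      · simpa only [if_neg (by omega : p ≠ 0), if_pos hpm.2, prismBdry_of_ne hpm.1 hpm.2 hpk]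
          using hasFaces_s_last (c p)
      · simpa [prismBdry_prev_last hk2] using hw
      · simpa [prismBdry_last hk2] using hw')
  exact ⟨h, L.d_mem _ _ (by omega) V hVL, _, by rwa [prismBdry_self hk1] at hH⟩

lemma exists_exchange_of_relFaces (hK : K.IsKan) {L : Subcomplex K} (hL : L.IsKan)
    {w : K.obj (m + 2)} (hw : HasFaces w c) (hc0 : c 0 ∈ L.mem (m + 1))
    (hk1 : 1 ≤ k) (hk2 : k ≤ m + 1) (hh : h ∈ L.mem (m + 1))
    {H : K.obj (m + 2)} (hH : HasFaces H (relFaces h (c k) x')) :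
    ∃ l' ∈ L.mem (m + 1), ∃ w' : K.obj (m + 2), HasFaces w' (exchangeFaces c k x' l') := by
  have hc := hw.faceCompat
  obtain ⟨V, hVL, hV, -⟩ := hL.exists_fill (t := capFaces c k h h) (B := capBdry c k x')
    (j := m + 2) le_rfl (faceCompat_capBdry hk1 hk2)
    (fun p hp hpm => by
      by_cases hpk : p = k - 1
      · subst hpk
        rw [capFaces_hole, capBdry_hole]
        exact hasFaces_relZeroFaceBdry hc hk1 (by omega) hH
      · exact hasFaces_capFaces (by omega) hpk)
    (fun p _ _ => capFaces_mem hc0 hh hh p)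
  set l' := K.d (m + 1) (m + 2) V
  have hVf : HasFaces V (capFaces c k h l') :=
    .of_horn hV (fun p hp hpm => by unfold capFaces; split_ifs <;> first | rfl | omega)
      (capFaces_last hk2 h l').symm
  obtain ⟨U, -, hw'⟩ := hK.exists_fill (j := m + 3) (B := prismBdry c k x' h l')
    (t := fun p => if p = 0 then V else if p = k then H
      else if p ≤ m + 1 then K.s (m + 1) (m + 1) (c p) else w) le_rfl
    (faceCompat_prismBdry hc hk1 hk2)
    (fun p hp hpm => by
      obtain rfl | rfl | hpm | rfl :
          p = 0 ∨ p = k ∨ (1 ≤ p ∧ p ≤ m + 1 ∧ p ≠ k) ∨ p = m + 2 := by omega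
      · simpa using hVf
      · simpa only [if_neg (by omega : p ≠ 0), ↓reduceIte, prismBdry_self hk1] using hH
      · simpa only [if_neg (by omega : p ≠ 0), if_neg hpm.2.2, if_pos hpm.2.1,
          prismBdry_of_ne hpm.1 hpm.2.1 hpm.2.2] using hasFaces_s_last (c p)
      · simpa [prismBdry_prev_last hk2, show m + 2 ≠ k by omega] using hw)
  exact ⟨l', L.d_mem _ _ le_rfl V hVL, _, by rwa [prismBdry_last hk2] at hw'⟩

variable (c x')

/-! For `k = m + 2` the cap has faces `(s_{m-1} d_0 c_0, …, s_{m-1} d_{m-1} c_0, c_0, l', h)`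
and the prism `(V, s_m c_1, …, s_m c_m, w, w', H)`. -/

def capFacesTop (h l' : K.obj (m + 1)) (i : ℕ) : K.obj (m + 1) :=
  if i < m then K.s m (m - 1) (K.d m i (c 0)) else if i = m then c 0 else if i = m + 1 then l'
  else h

def capBdryTop (i q : ℕ) : K.obj m :=
  if i < m then K.d m q (K.s m (m - 1) (K.d m i (c 0))) else if i = m then K.d m q (c 0)
  else if i = m + 1 then zeroFaceBdry c (m + 2) x' q else relZeroFaceBdry c (m + 2) x' q

def prismBdryTop (h l' : K.obj (m + 1)) (p i : ℕ) : K.obj (m + 1) :=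
  if p = 0 then capFacesTop c h l' i else if p ≤ m then sPenultFaces (c p) i
  else if p = m + 1 then c i else if p = m + 2 then exchangeFaces c (m + 2) x' l' i
  else relFaces h (c (m + 2)) x' i

variable {c x'}

lemma capFacesTop_mem {L : Subcomplex K} (hc0 : c 0 ∈ L.mem (m + 1)) (hh : h ∈ L.mem (m + 1))
    (hl' : l' ∈ L.mem (m + 1)) (p : ℕ) : capFacesTop c h l' p ∈ L.mem (m + 1) := by
  unfold capFacesTop
  split_ifs with hpm
  exacts [L.s_mem m (m - 1) (by omega) _ (L.d_mem m p (by omega) _ hc0), hc0, hl', hh]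

lemma hasFaces_capFacesTop {p : ℕ} (hp : p ≤ m) :
    HasFaces (capFacesTop c h l' p) (capBdryTop c x' p) := by
  intro q hq
  unfold capFacesTop capBdryTop
  split_ifs <;> first | rfl | omega

lemma capFacesTop_penult (h l' : K.obj (m + 1)) : capFacesTop c h l' (m + 1) = l' := by
  rw [capFacesTop, if_neg (by omega), if_neg (by omega), if_pos rfl]

lemma capFacesTop_last (h l' : K.obj (m + 1)) : capFacesTop c h l' (m + 2) = h := by
  rw [capFacesTop, if_neg (by omega), if_neg (by omega), if_neg (by omega)]

lemma capBdryTop_penult : capBdryTop c x' (m + 1) = zeroFaceBdry c (m + 2) x' := by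
  funext q
  rw [capBdryTop, if_neg (by omega), if_neg (by omega), if_pos rfl]

lemma capBdryTop_last : capBdryTop c x' (m + 2) = relZeroFaceBdry c (m + 2) x' := by
  funext q
  rw [capBdryTop, if_neg (by omega), if_neg (by omega), if_neg (by omega)]

lemma faceCompat_capBdryTop : FaceCompat (m + 2) (capBdryTop c x') := by
  intro q j hqj hj
  have hlow : ∀ {i}, i < m →
      capBdryTop c x' i = fun q => K.d m q (K.s m (m - 1) (K.d m i (c 0))) :=
    fun hi => funext fun _ => if_pos hi
  have hmid : capBdryTop c x' m = fun q => K.d m q (c 0) :=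
    funext fun _ => by rw [capBdryTop, if_neg (by omega), if_pos rfl]
  obtain hjm | hjm | hjm | hjm : j < m ∨ j = m ∨ j = m + 1 ∨ j = m + 2 := by omega
  · rw [hlow hjm, hlow (by omega)]
    exact d_s_d_comm hqj (by omega) (by omega) _
  · subst j
    rw [hmid, hlow hqj]
    exact (K.ds_self m (m - 1) (by omega) _).symm
  · subst j
    rw [capBdryTop_penult, zeroFaceBdry, if_neg (by omega), Nat.add_sub_cancel]
    obtain hqm | hqm : q < m ∨ q = m := by omega
    · rw [hlow hqm]
      have e := K.ds_succ m (m - 1) (by omega) (K.d m q (c 0))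
      rw [Nat.sub_add_cancel (by omega)] at e
      exact e.symm
    · subst q
      rw [hmid]
  · subst j
    rw [capBdryTop_last, relZeroFaceBdry, show m + 2 - 1 = m + 1 by omega]
    obtain hqm | hqm | hqm : q < m ∨ q = m ∨ q = m + 1 := by omega
    · rw [if_neg (by omega), hlow hqm]
      exact d_s_d_last hqm _
    · subst q
      rw [if_neg (by omega), hmid, K.ds_self m m le_rfl]
    · subst q
      rw [if_pos rfl, capBdryTop_penult, zeroFaceBdry, if_pos rfl]

@[simp] lemma prismBdryTop_zero : prismBdryTop c x' h l' 0 = capFacesTop c h l' :=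
  funext fun _ => if_pos rfl

lemma prismBdryTop_of_mid {p : ℕ} (hp1 : 1 ≤ p) (hp : p ≤ m) :
    prismBdryTop c x' h l' p = sPenultFaces (c p) := by
  funext i
  rw [prismBdryTop, if_neg (by omega), if_pos hp]

lemma prismBdryTop_succ : prismBdryTop c x' h l' (m + 1) = c := by
  funext i
  rw [prismBdryTop, if_neg (by omega), if_neg (by omega), if_pos rfl]

lemma prismBdryTop_penult : prismBdryTop c x' h l' (m + 2) = exchangeFaces c (m + 2) x' l' := by
  funext i
  rw [prismBdryTop, if_neg (by omega), if_neg (by omega), if_neg (by omega), if_pos rfl]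

lemma prismBdryTop_last : prismBdryTop c x' h l' (m + 3) = relFaces h (c (m + 2)) x' := by
  funext i
  rw [prismBdryTop, if_neg (by omega), if_neg (by omega), if_neg (by omega), if_neg (by omega)]

lemma faceCompat_prismBdryTop (hc : FaceCompat (m + 2) (fun p i => K.d m i (c p))) :
    FaceCompat (m + 3) (prismBdryTop c x' h l') := by
  intro i p hip hp
  obtain hpm | rfl | rfl | rfl : p ≤ m ∨ p = m + 1 ∨ p = m + 2 ∨ p = m + 3 := by omega
  · rw [prismBdryTop_of_mid (by omega) hpm, sPenultFaces, if_pos (by omega)]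
    rcases Nat.eq_zero_or_pos i with rfl | hi
    · rw [prismBdryTop_zero, capFacesTop, if_pos (by omega)]
      exact congrArg _ (hc 0 p hip (by omega))
    · rw [prismBdryTop_of_mid hi (by omega), sPenultFaces, if_pos (by omega)]
      exact congrArg _ (hc i p hip (by omega))
  · rw [prismBdryTop_succ, Nat.add_sub_cancel]
    rcases Nat.eq_zero_or_pos i with rfl | hi
    · rw [prismBdryTop_zero, capFacesTop, if_neg (by omega), if_pos rfl]
    · rw [prismBdryTop_of_mid hi (by omega), sPenultFaces, if_neg (by omega), if_pos (by omega)]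
  · rw [prismBdryTop_penult, show m + 2 - 1 = m + 1 by omega, exchangeFaces]
    obtain rfl | hi | rfl : i = 0 ∨ (1 ≤ i ∧ i ≤ m) ∨ i = m + 1 := by omega
    · rw [if_pos rfl, prismBdryTop_zero, capFacesTop_penult]
    · rw [if_neg (by omega), if_neg (by omega), prismBdryTop_of_mid hi.1 hi.2, sPenultFaces,
        if_neg (by omega), if_pos (by omega)]
    · rw [if_neg (by omega), if_neg (by omega), prismBdryTop_succ]
  · rw [prismBdryTop_last, show m + 3 - 1 = m + 2 by omega, relFaces]
    obtain rfl | hi | rfl | rfl : i = 0 ∨ (1 ≤ i ∧ i ≤ m) ∨ i = m + 1 ∨ i = m + 2 := by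
      omega
    · rw [if_pos rfl, prismBdryTop_zero, capFacesTop_last]
    · rw [if_neg (by omega), if_pos (by omega), prismBdryTop_of_mid hi.1 hi.2, sPenultFaces,
        if_neg (by omega), if_neg (by omega)]
      exact congrArg _ (hc i (m + 2) (by omega) le_rfl)
    · rw [if_neg (by omega), if_neg (by omega), if_pos rfl, prismBdryTop_succ]
    · rw [if_neg (by omega), if_neg (by omega), if_neg (by omega), prismBdryTop_penult,
        exchangeFaces, if_neg (by omega), if_pos rfl]

lemma exists_relFaces_of_exchange_top (hK : K.IsKan) {L : Subcomplex K} (hL : L.IsKan)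
    {w : K.obj (m + 2)} (hw : HasFaces w c) (hc0 : c 0 ∈ L.mem (m + 1))
    (hl' : l' ∈ L.mem (m + 1)) {w' : K.obj (m + 2)}
    (hw' : HasFaces w' (exchangeFaces c (m + 2) x' l')) :
    ∃ h ∈ L.mem (m + 1), ∃ H : K.obj (m + 2), HasFaces H (relFaces h (c (m + 2)) x') := by
  have hc := hw.faceCompat
  obtain ⟨V, hVL, hV, -⟩ := hL.exists_fill (t := capFacesTop c l' l') (B := capBdryTop c x')
    (j := m + 2) le_rfl faceCompat_capBdryTop
    (fun p hp hpm => by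
      obtain hpm | rfl : p ≤ m ∨ p = m + 1 := by omega
      · exact hasFaces_capFacesTop hpm
      · rw [capFacesTop_penult, capBdryTop_penult]
        exact hasFaces_zeroFaceBdry hc hw')
    (fun p _ _ => capFacesTop_mem hc0 hl' hl' p)
  set h := K.d (m + 1) (m + 2) V
  have hVf : HasFaces V (capFacesTop c h l') :=
    .of_horn hV (fun p hp hpm => by unfold capFacesTop; split_ifs <;> first | rfl | omega)
      (capFacesTop_last h l').symm
  obtain ⟨U, -, hH⟩ := hK.exists_fill (j := m + 3) (B := prismBdryTop c x' h l')
    (t := fun p => if p = 0 then V else if p ≤ m then K.s (m + 1) m (c p)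
      else if p = m + 1 then w else w') le_rfl (faceCompat_prismBdryTop hc)
    (fun p hp hpm => by
      obtain rfl | hpm | rfl | rfl :
          p = 0 ∨ (1 ≤ p ∧ p ≤ m) ∨ p = m + 1 ∨ p = m + 2 := by omega
      · simpa using hVf
      · simpa only [if_neg (by omega : p ≠ 0), if_pos hpm.2, prismBdryTop_of_mid hpm.1 hpm.2]
          using hasFaces_s_penult (c p)
      · simpa [prismBdryTop_succ] using hw
      · simpa [prismBdryTop_penult] using hw')
  exact ⟨h, L.d_mem _ _ le_rfl V hVL, _, by rwa [prismBdryTop_last] at hH⟩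

lemma exists_exchange_of_relFaces_top (hK : K.IsKan) {L : Subcomplex K} (hL : L.IsKan)
    {w : K.obj (m + 2)} (hw : HasFaces w c) (hc0 : c 0 ∈ L.mem (m + 1))
    (hh : h ∈ L.mem (m + 1)) {H : K.obj (m + 2)} (hH : HasFaces H (relFaces h (c (m + 2)) x')) :
    ∃ l' ∈ L.mem (m + 1), ∃ w' : K.obj (m + 2),
      HasFaces w' (exchangeFaces c (m + 2) x' l') := by
  have hc := hw.faceCompat
  obtain ⟨V, hVL, hV, -⟩ := hL.exists_fill (t := capFacesTop c h h) (B := capBdryTop c x')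
    (j := m + 1) (by omega) faceCompat_capBdryTop
    (fun p hp hpm => by
      obtain hpm | rfl : p ≤ m ∨ p = m + 2 := by omega
      · exact hasFaces_capFacesTop hpm
      · rw [capFacesTop_last, capBdryTop_last]
        exact hasFaces_relZeroFaceBdry hc (by omega) le_rfl hH)
    (fun p _ _ => capFacesTop_mem hc0 hh hh p)
  set l' := K.d (m + 1) (m + 1) V
  have hVf : HasFaces V (capFacesTop c h l') :=
    .of_horn hV (fun p hp hpm => by unfold capFacesTop; split_ifs <;> rfl)
      (capFacesTop_penult h l').symm
  obtain ⟨U, -, hw'⟩ := hK.exists_fill (j := m + 2) (B := prismBdryTop c x' h l')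
    (t := fun p => if p = 0 then V else if p ≤ m then K.s (m + 1) m (c p)
      else if p = m + 1 then w else H) (by omega) (faceCompat_prismBdryTop hc)
    (fun p hp hpm => by
      obtain rfl | hpm | rfl | rfl :
          p = 0 ∨ (1 ≤ p ∧ p ≤ m) ∨ p = m + 1 ∨ p = m + 3 := by omega
      · simpa using hVf
      · simpa only [if_neg (by omega : p ≠ 0), if_pos hpm.2, prismBdryTop_of_mid hpm.1 hpm.2]
          using hasFaces_s_penult (c p)
      · simpa [prismBdryTop_succ] using hw
      · simpa [prismBdryTop_last] using hH)
  exact ⟨l', L.d_mem _ _ (by omega) V hVL, _, by rwa [prismBdryTop_penult] at hw'⟩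

theorem exchange_iff_relFaces (hK : K.IsKan) {L : Subcomplex K} (hL : L.IsKan)
    {c : ℕ → K.obj (m + 1)} {w : K.obj (m + 2)} (hw : HasFaces w c)
    (hc0 : c 0 ∈ L.mem (m + 1)) {k : ℕ} (hk1 : 1 ≤ k) (hk2 : k ≤ m + 2)
    (x' : K.obj (m + 1)) :
    (∃ l' ∈ L.mem (m + 1), ∃ w' : K.obj (m + 2), HasFaces w' (exchangeFaces c k x' l')) ↔
      ∃ h ∈ L.mem (m + 1), ∃ H : K.obj (m + 2), HasFaces H (relFaces h (c k) x') := by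
  rcases Nat.lt_or_ge k (m + 2) with hk | hk
  · exact ⟨fun ⟨_, hl', _, hw'⟩ =>
        exists_relFaces_of_exchange hK hL hw hc0 hk1 (by omega) hl' hw',
      fun ⟨_, hh, _, hH⟩ => exists_exchange_of_relFaces hK hL hw hc0 hk1 (by omega) hh hH⟩
  · obtain rfl : k = m + 2 := by omega
    exact ⟨fun ⟨_, hl', _, hw'⟩ => exists_relFaces_of_exchange_top hK hL hw hc0 hl' hw',
      fun ⟨_, hh, _, hH⟩ => exists_exchange_of_relFaces_top hK hL hw hc0 hh hH⟩

lemma isBoundary_relTuple_iff {h x y : K.obj (m + 1)} :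
    K.IsBoundary (K.relTuple h x y) ↔ ∃ H : K.obj (m + 2), HasFaces H (relFaces h x y) :=
  exists_congr fun _ => bdry_eq_iff_hasFaces (f := relFaces h x y)

open Fin.NatCast in
lemma isBoundary_update_iff {c : Fin (m + 3) → K.obj (m + 1)} {k : Fin (m + 3)}
    {x l : K.obj (m + 1)} :
    K.IsBoundary (Function.update (Function.update c k x) 0 l) ↔
      ∃ w : K.obj (m + 2),
        HasFaces w (exchangeFaces (fun p : ℕ => c (p : Fin (m + 3))) k x l) := by
  refine exists_congr fun w => Eq.congr_right ?_ |>.trans bdry_eq_iff_hasFaces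
  funext i
  simp only [Function.update_apply, exchangeFaces, Fin.ext_iff, Fin.val_zero, Fin.cast_val_eq_self]

end SSetC

open SSetC in
/-- **relative Key Lemma.** Let `(K, L)` be a pair of Kan complexes,
`c = (l, x_1, …, x_n)` a boundary (of simplices of dimension `m+1`, so `n = m+2`)
with `l = c 0 ∈ L`, let `1 ≤ k`, and let `x_k'` satisfy `d_i x_k = d_i x_k'` for
`1 ≤ i ≤ m+1` with `d_0 x_k, d_0 x_k' ∈ L`.  Then there exists `l' ∈ L` such that
`(l', x_1, …, x_k', …, x_n)` is a boundary if and only if `x_k` is homotopic to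
`x_k'` relative to `L`. -/
theorem relative_key_lemma (K : SSetC) (hK : K.IsKan)
    (L : Subcomplex K) (hL : L.IsKan) (m : ℕ)
    (c : Fin (m + 3) → K.obj (m + 1))
    (hl : c 0 ∈ L.mem (m + 1))
    (hc : K.IsBoundary c)
    (k : Fin (m + 3)) (hk : 1 ≤ (k : ℕ))
    (xk' : K.obj (m + 1))
    (hfaces : ∀ i : ℕ, 1 ≤ i → i ≤ m + 1 → K.d m i (c k) = K.d m i xk')
    (h0 : K.d m 0 (c k) ∈ L.mem m) (h0' : K.d m 0 xk' ∈ L.mem m) :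
    (∃ l' ∈ L.mem (m + 1),
        K.IsBoundary (Function.update (Function.update c k xk') 0 l')) ↔
      K.HomotopicRel L (c k) xk' := by
  obtain ⟨w, hw⟩ := hc
  open Fin.NatCast in
  have key := exchange_iff_relFaces (c := fun p : ℕ => c p) hK hL
    (bdry_eq_iff_hasFaces.1 (by simpa using hw))
    (by simpa using hl) hk (by omega) xk'
  simp only [Fin.cast_val_eq_self] at key
  simp only [HomotopicRel, isBoundary_relTuple_iff, isBoundary_update_iff, key]
  exact ⟨fun h => ⟨hfaces, h0, h0', h⟩, fun h => h.2.2.2⟩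
end

section
/- Every n-connected minimal pointed Kan complex (K,⋆) is trivial up to dimension n: K_k = {⋆_k} for all 0 ≤ k ≤ n. -/
/-! Induction on `k`: once every `k`-simplex is `⋆_k`, every `(k+1)`-simplex is spherical, so it
is homotopic to `⋆_{k+1}` by connectivity and has the same boundary; minimality identifies them. -/

namespace SSetC

variable (K : SSetC) (b : K.obj 0)

lemma sameBdry_basept_of_isSph' {k : ℕ} {x : K.obj k} (hx : K.IsSph' b x) :
    K.SameBdry x (K.basept b k) := by
  cases k with
  | zero => trivial
  | succ k =>
    funext i
    exact (hx i).trans (K.d_basept b k i (Nat.lt_succ_iff.mp i.isLt)).symm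

lemma isSph'_of_forall_eq_basept {k : ℕ} (h : ∀ y : K.obj k, y = K.basept b k)
    (x : K.obj (k + 1)) : K.IsSph' b x :=
  fun i => h (K.d k i x)

variable {K}

lemma Minimal.eq_basept_of_homotopic (hmin : K.Minimal) {k : ℕ} {x : K.obj k}
    (hx : K.IsSph' b x) (hhom : K.Homotopic x (K.basept b k)) : x = K.basept b k :=
  hmin k x _ (K.sameBdry_basept_of_isSph' b hx) hhom

end SSetC

open SSetC in
theorem connected_minimal_trivial_general (K : SSetC) (b : K.obj 0) (n : ℕ)
    (hmin : K.Minimal)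
    (hconn : ∀ k ≤ n, ∀ x : K.obj k, K.IsSph' b x → K.Homotopic x (K.basept b k)) :
    ∀ k ≤ n, ∀ x : K.obj k, x = K.basept b k := by
  intro k
  induction k with
  | zero => exact fun hk x => hmin.eq_basept_of_homotopic b trivial (hconn 0 hk x trivial)
  | succ k ih =>
    intro hk x
    have hx : K.IsSph' b x := K.isSph'_of_forall_eq_basept b (ih (by omega)) x
    exact hmin.eq_basept_of_homotopic b hx (hconn (k + 1) hk x hx)

open SSetC in
/-- Every `n`-connected minimal pointed Kan complex `(K, ⋆)` is
trivial up to dimension `n`: `K_k = {⋆_k}` for all `k ≤ n`. -/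
theorem connected_minimal_trivial (K : SSetC) (hK : K.IsKan) (b : K.obj 0) (n : ℕ)
    (hmin : K.Minimal)
    (hconn : ∀ k ≤ n, ∀ x : K.obj k, K.IsSph' b x → K.Homotopic x (K.basept b k)) :
    ∀ k ≤ n, ∀ x : K.obj k, x = K.basept b k :=
  connected_minimal_trivial_general K b n hmin hconn
end

section
/- For every pointed Kan complex (K,⋆) and every pointed pair (K,L,⋆) of Kan complexes, the Hurewicz map φ([x]_π) := [x]_H is a well-defined, natural group homomorphism φ : π_n(K,⋆) → H_n(K,⋆) and φ : π_n(K,L,⋆) → H_n(K,L) (integer coefficients), where on the left [x]_π denotes the homotopy class and on the right [x]_H the homology class of the simplex x. -/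
namespace SSetC

attribute [local instance] Classical.propDecidable

variable (K : SSetC)

section Homology

variable (A : Type) [AddCommGroup A] (M N : Subcomplex K)

/-- The `n`-simplices of `M` not lying in `N`: a basis of the relative chain
group `C_n(M, N; A)` (linear combinations of simplices of `M` modulo those of `N`). -/
def pSimp (n : ℕ) := {x : K.obj n // x ∈ M.mem n ∧ x ∉ N.mem n}

/-- The differential `d(x) = Σ (-1)^i d_i x` of the relative chain complex. -/
noncomputable def pDiff (n : ℕ) : (K.pSimp M N (n + 1) →₀ A) →+ (K.pSimp M N n →₀ A) :=
  Finsupp.liftAddHom fun x => ∑ i : Fin (n + 2), (-1 : ℤ) ^ (i : ℕ) •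
    (if h : K.d n i x.1 ∈ N.mem n then 0 else
      Finsupp.singleAddHom (⟨K.d n i x.1,
        ⟨M.d_mem n i (Nat.lt_succ_iff.mp i.isLt) x.1 x.2.1, h⟩⟩ : K.pSimp M N n))

/-- The group of relative `n`-cycles. -/
noncomputable def pCycles : ∀ n : ℕ, AddSubgroup (K.pSimp M N n →₀ A)
  | 0 => ⊤
  | n + 1 => (K.pDiff A M N n).ker

/-- The group of relative `n`-boundaries. -/
noncomputable def pBoundaries (n : ℕ) : AddSubgroup (K.pSimp M N n →₀ A) :=
  (K.pDiff A M N n).range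

/-- The relative simplicial homology `H_n = Z_n / B_n`. -/
def pHomology (n : ℕ) :=
  K.pCycles A M N n ⧸ (K.pBoundaries A M N n).addSubgroupOf (K.pCycles A M N n)

noncomputable instance (n : ℕ) : AddCommGroup (K.pHomology A M N n) :=
  QuotientAddGroup.Quotient.addCommGroup _

/-- The homology class of a cycle. -/
noncomputable def homCls {n : ℕ} (z : K.pCycles A M N n) : K.pHomology A M N n :=
  QuotientAddGroup.mk z

/-- The chain associated to a single simplex (zero if the simplex lies in `N`). -/
noncomputable def simpChain {n : ℕ} (a : A) (x : K.obj n) : K.pSimp M N n →₀ A :=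
  if h : x ∈ M.mem n ∧ x ∉ N.mem n then Finsupp.single (⟨x, h⟩ : K.pSimp M N n) a else 0

end Homology

/-- The chain map induced by a simplicial map respecting the distinguished
subcomplexes (simplices falling into `N'` are sent to zero). -/
noncomputable def pChainMap {K K' : SSetC} (f : SMap K K') (A : Type) [AddCommGroup A]
    (M N : Subcomplex K) (M' N' : Subcomplex K')
    (hM : ∀ n x, x ∈ M.mem n → f.app n x ∈ M'.mem n) (n : ℕ) :
    (K.pSimp M N n →₀ A) →+ (K'.pSimp M' N' n →₀ A) :=
  Finsupp.liftAddHom fun x =>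
    if h : f.app n x.1 ∈ N'.mem n then 0
    else Finsupp.singleAddHom (⟨f.app n x.1, ⟨hM n x.1 x.2.1, h⟩⟩ : K'.pSimp M' N' n)

/-- `Φ` is the map induced on homology by the simplicial map `f`. -/
def HInduces {K K' : SSetC} (f : SMap K K') (A : Type) [AddCommGroup A]
    (M N : Subcomplex K) (M' N' : Subcomplex K')
    (hM : ∀ n x, x ∈ M.mem n → f.app n x ∈ M'.mem n) (n : ℕ)
    (Φ : K.pHomology A M N n → K'.pHomology A M' N' n) : Prop :=
  ∀ (z : K.pCycles A M N n) (w : K'.pCycles A M' N' n),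
    (w : K'.pSimp M' N' n →₀ A) = pChainMap f A M N M' N' hM n (z : K.pSimp M N n →₀ A) →
      Φ (K.homCls A M N z) = K'.homCls A M' N' w

end SSetC
namespace SSetC

/-- `F` is the map induced on the homotopy groups `π_{m+1}` by the pointed
simplicial map `f` (i.e. `F[x] = [f(x)]`). -/
def Induces {K K' : SSetC} (b : K.obj 0) (b' : K'.obj 0) (m : ℕ) (f : SMap K K')
    (F : K.piGrp b m → K'.piGrp b' m) : Prop :=
  ∀ (x : K.Sph b m) (y : K'.Sph b' m), f.app (m + 1) x.1 = y.1 →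
    F (K.cls b m x) = K'.cls b' m y

variable (K : SSetC)

/-- The `n`-th homology group `H_n(K, ⋆; ℤ)` of a pointed simplicial set. -/
noncomputable def Hpt (b : K.obj 0) (n : ℕ) : Type :=
  K.pHomology ℤ K.topSub (K.ptSub b) n

noncomputable instance (b : K.obj 0) (n : ℕ) : AddCommGroup (K.Hpt b n) :=
  inferInstanceAs (AddCommGroup (K.pHomology ℤ K.topSub (K.ptSub b) n))

/-- `φ` is the Hurewicz map `π_{m+1}(K,⋆) → H_{m+1}(K,⋆)`, `[x]_π ↦ [x]_H`. -/
def HurewiczChar (b : K.obj 0) (m : ℕ)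
    (φ : K.piGrp b m → K.Hpt b (m + 1)) : Prop :=
  ∀ (x : K.Sph b m) (z : K.pCycles ℤ K.topSub (K.ptSub b) (m + 1)),
    (z : K.pSimp K.topSub (K.ptSub b) (m + 1) →₀ ℤ) =
        K.simpChain ℤ K.topSub (K.ptSub b) (1 : ℤ) x.1 →
      φ (K.cls b m x) = K.homCls ℤ K.topSub (K.ptSub b) z

/-- The `n`-th relative homology group `H_n(K, L; ℤ)` of a simplicial pair. -/
noncomputable def Hrel (L : Subcomplex K) (n : ℕ) : Type :=
  K.pHomology ℤ K.topSub L n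

noncomputable instance (L : Subcomplex K) (n : ℕ) : AddCommGroup (K.Hrel L n) :=
  inferInstanceAs (AddCommGroup (K.pHomology ℤ K.topSub L n))

/-- `φ` is the relative Hurewicz map `π_{m+1}(K,L,⋆) → H_{m+1}(K,L)`,
`[x]_π ↦ [x]_H`. -/
def RelHurewiczChar (L : Subcomplex K) (b : K.obj 0) (m : ℕ)
    (φ : K.piRel L b m → K.Hrel L (m + 1)) : Prop :=
  ∀ (x : K.RelSph L b m) (z : K.pCycles ℤ K.topSub L (m + 1)),
    (z : K.pSimp K.topSub L (m + 1) →₀ ℤ) = K.simpChain ℤ K.topSub L (1 : ℤ) x.1 →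
      φ (K.relCls L b m x) = K.homCls ℤ K.topSub L z

end SSetC

/-!
A spherical simplex `x` (relative: `∂x = (l, ⋆, …, ⋆)` with `l ∈ L`) is a relative cycle, so it
has a class `[x]_H`. A homotopy from `x` to `y`, resp. a witness `w` for `[x][y] = [z]`, is a
simplex whose faces other than `x, y` (resp. `x, y, z`) lie in the subcomplex, so `d w` is
`±(x - y)`, resp. `±(x + y - z)`, modulo that subcomplex: this gives well-definedness and
additivity. Witnesses exist by the Kan conditions for `K` and `L`. Naturality holds because
simplicial maps commute with faces.
-/

namespace SSetC

variable (K : SSetC)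

section Chains

variable (N : Subcomplex K)

lemma simpChain_of_mem {n : ℕ} {x : K.obj n} (hx : x ∈ N.mem n) :
    K.simpChain ℤ K.topSub N 1 x = 0 :=
  dif_neg fun h => h.2 hx

lemma simpChain_of_notMem {n : ℕ} {x : K.obj n} (hx : x ∉ N.mem n) :
    K.simpChain ℤ K.topSub N 1 x = Finsupp.single ⟨x, Set.mem_univ x, hx⟩ 1 :=
  dif_pos ⟨Set.mem_univ x, hx⟩

lemma pDiff_simpChain {n : ℕ} (w : K.obj (n + 1)) :
    K.pDiff ℤ K.topSub N n (K.simpChain ℤ K.topSub N 1 w)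
      = ∑ i : Fin (n + 2), (-1 : ℤ) ^ (i : ℕ) • K.simpChain ℤ K.topSub N 1 (K.d n i w) := by
  by_cases hw : w ∈ N.mem (n + 1)
  · rw [K.simpChain_of_mem N hw, map_zero]
    refine (Finset.sum_eq_zero fun i _ => ?_).symm
    rw [K.simpChain_of_mem N (N.d_mem n i (Nat.lt_succ_iff.mp i.isLt) w hw), smul_zero]
  · rw [K.simpChain_of_notMem N hw, pDiff]
    erw [Finsupp.liftAddHom_apply_single]
    rw [AddMonoidHom.finsetSum_apply]
    refine Finset.sum_congr rfl fun i _ => ?_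
    by_cases h : K.d n i w ∈ N.mem n
    · rw [dif_pos h, K.simpChain_of_mem N h, smul_zero]
      erw [smul_zero]
      rfl
    · rw [dif_neg h, K.simpChain_of_notMem N h]
      rfl

lemma simpChain_mem_pCycles {n : ℕ} {x : K.obj (n + 1)}
    (hx : ∀ i : Fin (n + 2), K.d n i x ∈ N.mem n) :
    K.simpChain ℤ K.topSub N 1 x ∈ K.pCycles ℤ K.topSub N (n + 1) := by
  show _ ∈ (K.pDiff ℤ K.topSub N n).ker
  rw [AddMonoidHom.mem_ker, pDiff_simpChain]
  exact Finset.sum_eq_zero fun i _ => by rw [K.simpChain_of_mem N (hx i), smul_zero]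

/-- Faces of `w` lying in `N` contribute nothing to `d w`. -/
lemma sum_faces_mem_pBoundaries {n : ℕ} (w : K.obj (n + 1)) (S : Finset (Fin (n + 2)))
    (hS : ∀ i ∉ S, K.d n i w ∈ N.mem n) :
    ∑ i ∈ S, (-1 : ℤ) ^ (i : ℕ) • K.simpChain ℤ K.topSub N 1 (K.d n i w)
      ∈ K.pBoundaries ℤ K.topSub N n := by
  refine ⟨K.simpChain ℤ K.topSub N 1 w, ?_⟩
  rw [pDiff_simpChain]
  exact (Finset.sum_subset (Finset.subset_univ S) fun i _ hi => by
    rw [K.simpChain_of_mem N (hS i hi), smul_zero]).symm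

lemma neg_one_pow_smul_mem_pBoundaries_iff {n : ℕ} (k : ℕ) (v : K.pSimp K.topSub N n →₀ ℤ) :
    (-1 : ℤ) ^ k • v ∈ K.pBoundaries ℤ K.topSub N n ↔ v ∈ K.pBoundaries ℤ K.topSub N n := by
  refine ⟨fun h => ?_, fun h => AddSubgroup.zsmul_mem _ h _⟩
  have hsq : ((-1 : ℤ) ^ k) * (-1) ^ k = 1 := by rw [← mul_pow]; norm_num
  simpa [smul_smul, hsq] using AddSubgroup.zsmul_mem _ h ((-1 : ℤ) ^ k)

lemma homCls_eq_of_sub_mem {n : ℕ} {z w : K.pCycles ℤ K.topSub N n}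
    (h : (z : K.pSimp K.topSub N n →₀ ℤ) - w ∈ K.pBoundaries ℤ K.topSub N n) :
    K.homCls ℤ K.topSub N z = K.homCls ℤ K.topSub N w := by
  unfold homCls
  erw [QuotientAddGroup.eq, AddSubgroup.mem_addSubgroupOf]
  simpa [neg_add_eq_sub] using (K.pBoundaries ℤ K.topSub N n).neg_mem h

lemma homCls_add {n : ℕ} (z w : K.pCycles ℤ K.topSub N n) :
    K.homCls ℤ K.topSub N (z + w) = K.homCls ℤ K.topSub N z + K.homCls ℤ K.topSub N w :=
  rfl

/-- The homology class `[x]_H` of a simplex with all faces in `N`. -/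
noncomputable def simplexClass {n : ℕ} (x : K.obj (n + 1))
    (hx : ∀ i : Fin (n + 2), K.d n i x ∈ N.mem n) : K.pHomology ℤ K.topSub N (n + 1) :=
  K.homCls ℤ K.topSub N ⟨_, K.simpChain_mem_pCycles N hx⟩

lemma homCls_eq_simplexClass {n : ℕ} {x : K.obj (n + 1)}
    (hx : ∀ i : Fin (n + 2), K.d n i x ∈ N.mem n) (z : K.pCycles ℤ K.topSub N (n + 1))
    (hz : (z : K.pSimp K.topSub N (n + 1) →₀ ℤ) = K.simpChain ℤ K.topSub N 1 x) :
    K.homCls ℤ K.topSub N z = K.simplexClass N x hx :=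
  congrArg _ (Subtype.ext hz)

lemma simplexClass_eq_of_faces {n : ℕ} (w : K.obj (n + 2)) {x y : K.obj (n + 1)}
    (hx : ∀ i : Fin (n + 2), K.d n i x ∈ N.mem n) (hy : ∀ i : Fin (n + 2), K.d n i y ∈ N.mem n)
    (hwN : ∀ i : ℕ, i < n + 1 → K.d (n + 1) i w ∈ N.mem (n + 1))
    (hwx : K.d (n + 1) (n + 1) w = x) (hwy : K.d (n + 1) (n + 2) w = y) :
    K.simplexClass N x hx = K.simplexClass N y hy := by
  have hB := K.sum_faces_mem_pBoundaries N w {⟨n + 1, by omega⟩, ⟨n + 2, by omega⟩}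
    fun i hi => hwN i (by simp [Fin.ext_iff] at hi; omega)
  rw [Finset.sum_pair (by simp [Fin.ext_iff]), hwx, hwy, pow_succ _ (n + 1), mul_neg_one,
    neg_smul, ← sub_eq_add_neg, ← smul_sub, neg_one_pow_smul_mem_pBoundaries_iff] at hB
  exact K.homCls_eq_of_sub_mem N hB

lemma simplexClass_eq_add_of_faces {n : ℕ} (w : K.obj (n + 2)) {x y z : K.obj (n + 1)}
    (hx : ∀ i : Fin (n + 2), K.d n i x ∈ N.mem n) (hy : ∀ i : Fin (n + 2), K.d n i y ∈ N.mem n)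
    (hz : ∀ i : Fin (n + 2), K.d n i z ∈ N.mem n)
    (hwN : ∀ i : ℕ, i < n → K.d (n + 1) i w ∈ N.mem (n + 1))
    (hwy : K.d (n + 1) n w = y) (hwz : K.d (n + 1) (n + 1) w = z)
    (hwx : K.d (n + 1) (n + 2) w = x) :
    K.simplexClass N z hz = K.simplexClass N x hx + K.simplexClass N y hy := by
  have hB := K.sum_faces_mem_pBoundaries N w
    {⟨n, by omega⟩, ⟨n + 1, by omega⟩, ⟨n + 2, by omega⟩}
    fun i hi => hwN i (by simp [Fin.ext_iff] at hi; omega)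
  rw [Finset.sum_insert (by simp [Fin.ext_iff]), Finset.sum_pair (by simp [Fin.ext_iff]), hwx, hwy,
    hwz] at hB
  have hrel : K.simpChain ℤ K.topSub N 1 z - (K.simpChain ℤ K.topSub N 1 x +
      K.simpChain ℤ K.topSub N 1 y) ∈ K.pBoundaries ℤ K.topSub N (n + 1) := by
    rw [← K.neg_one_pow_smul_mem_pBoundaries_iff N n]
    convert (K.pBoundaries ℤ K.topSub N (n + 1)).neg_mem hB using 1
    simp only [pow_succ]
    module
  rw [simplexClass, simplexClass, simplexClass, ← homCls_add]
  refine K.homCls_eq_of_sub_mem N ?_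
  rwa [AddSubgroup.coe_add]

lemma pChainMap_simpChain {K' : SSetC} (f : SMap K K') (N' : Subcomplex K')
    (hM : ∀ n x, x ∈ K.topSub.mem n → f.app n x ∈ K'.topSub.mem n) {n : ℕ} (x : K.obj n)
    (hxN : x ∈ N.mem n → f.app n x ∈ N'.mem n) :
    pChainMap f ℤ K.topSub N K'.topSub N' hM n (K.simpChain ℤ K.topSub N 1 x)
      = K'.simpChain ℤ K'.topSub N' 1 (f.app n x) := by
  by_cases hx : x ∈ N.mem n
  · rw [K.simpChain_of_mem N hx, map_zero, K'.simpChain_of_mem N' (hxN hx)]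
  · rw [K.simpChain_of_notMem N hx, pChainMap]
    erw [Finsupp.liftAddHom_apply_single]
    by_cases hfx : f.app n x ∈ N'.mem n
    · rw [dif_pos hfx, K'.simpChain_of_mem N' hfx]
      rfl
    · rw [dif_neg hfx, K'.simpChain_of_notMem N' hfx]
      rfl

variable {K N} in
lemma HInduces.apply_simplexClass {K' : SSetC} {f : SMap K K'} {N' : Subcomplex K'}
    {hM : ∀ n x, x ∈ K.topSub.mem n → f.app n x ∈ K'.topSub.mem n} {n : ℕ}
    {Ψ : K.pHomology ℤ K.topSub N (n + 1) → K'.pHomology ℤ K'.topSub N' (n + 1)}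
    (hΨ : HInduces f ℤ K.topSub N K'.topSub N' hM (n + 1) Ψ) {x : K.obj (n + 1)}
    (hx : ∀ i : Fin (n + 2), K.d n i x ∈ N.mem n)
    (hfx : ∀ i : Fin (n + 2), K'.d n i (f.app (n + 1) x) ∈ N'.mem n)
    (hxN : x ∈ N.mem (n + 1) → f.app (n + 1) x ∈ N'.mem (n + 1)) :
    Ψ (K.simplexClass N x hx) = K'.simplexClass N' (f.app (n + 1) x) hfx :=
  hΨ _ _ (K.pChainMap_simpChain N f N' hM x hxN).symm

end Chains

section Spherical

lemma bdry_eq_of_fill {m k : ℕ} {w : K.obj (m + 1)} {c c' : Fin (m + 2) → K.obj m}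
    (hw : ∀ i : Fin (m + 2), (i : ℕ) ≠ k → K.d m i w = c i)
    (hc : ∀ i : Fin (m + 2), (i : ℕ) ≠ k → c' i = c i)
    (hk : ∀ i : Fin (m + 2), (i : ℕ) = k → c' i = K.d m k w) :
    K.bdry w = c' := by
  funext i
  by_cases hi : (i : ℕ) = k
  · rw [hk i hi, ← hi]
    rfl
  · exact (hw i hi).trans (hc i hi).symm

lemma d_d_of_le {m i k : ℕ} (hki : k ≤ i) (hi : i ≤ m + 1) (w : K.obj (m + 2)) :
    K.d m i (K.d (m + 1) k w) = K.d m k (K.d (m + 1) (i + 1) w) := by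
  rw [K.dd m k (i + 1) (by omega) (by omega), Nat.add_sub_cancel]

variable {K} {L : Subcomplex K} {b : K.obj 0}

lemma basept_mem (hb : b ∈ L.mem 0) : ∀ n, K.basept b n ∈ L.mem n
  | 0 => hb
  | n + 1 => L.s_mem n 0 (Nat.zero_le _) _ (basept_mem hb n)

lemma IsSph.d_eq {m : ℕ} {x : K.obj (m + 1)} (hx : K.IsSph b x) {i : ℕ} (hi : i ≤ m + 1) :
    K.d m i x = K.basept b m :=
  hx ⟨i, by omega⟩

lemma IsRelSph.d_eq {m : ℕ} {x : K.obj (m + 1)} (hx : K.IsRelSph L b x) {i : ℕ} (hi1 : 1 ≤ i)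
    (hi : i ≤ m + 1) : K.d m i x = K.basept b m :=
  hx.2 ⟨i, by omega⟩ hi1

lemma IsRelSph.d_mem {m : ℕ} {x : K.obj (m + 1)} (hx : K.IsRelSph L b x) (hb : b ∈ L.mem 0)
    (i : Fin (m + 2)) : K.d m i x ∈ L.mem m := by
  rcases Nat.eq_zero_or_pos (i : ℕ) with hi | hi
  · rw [hi]
    exact hx.1
  · rw [hx.2 i hi]
    exact basept_mem hb m

lemma IsRelSph.isSph_d_zero {m : ℕ} {x : K.obj (m + 2)} (hx : K.IsRelSph L b x) :
    K.IsSph b (K.d (m + 1) 0 x) := fun i => by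
  rw [← Nat.add_sub_cancel (i : ℕ) 1, ← K.dd m 0 (i + 1) (by omega) (by omega),
    hx.d_eq (Nat.le_add_left 1 _) (by omega)]
  exact K.d_basept b m 0 (by omega)

lemma isRelSph_basept (hb : b ∈ L.mem 0) (m : ℕ) : K.IsRelSph L b (K.basept b (m + 1)) :=
  ⟨L.d_mem m 0 (Nat.zero_le _) _ (basept_mem hb (m + 1)), fun i _ => K.basept_isSph b m i⟩

lemma hornCompat_of_isSph {m : ℕ} (k : ℕ) {c : Fin (m + 3) → K.obj (m + 1)}
    (hc : ∀ j, K.IsSph b (c j)) : K.HornCompat k c := fun i j _ _ hij =>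
  ((hc j).d_eq (by omega)).trans ((hc i).d_eq (by omega)).symm

lemma hornCompat_of_isRelSph {m : ℕ} (k : ℕ) {c : Fin (m + 3) → K.obj (m + 1)}
    (hc : ∀ j : Fin (m + 3), 1 ≤ (j : ℕ) → (j : ℕ) ≠ k → K.IsRelSph L b (c j))
    (hc0 : ∀ j : Fin (m + 3), 1 ≤ (j : ℕ) → (j : ℕ) ≠ k →
      K.d m ((j : ℕ) - 1) (c 0) = K.d m 0 (c j)) :
    K.HornCompat k c := by
  intro i j hik hjk hij
  rcases Nat.eq_zero_or_pos (i : ℕ) with hi | hi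
  · obtain rfl : i = 0 := Fin.ext hi
    exact (hc0 j (by omega) hjk).symm
  · rw [(hc j (by omega) hjk).d_eq hi (by omega), (hc i hi hik).d_eq (by omega) (by omega)]

lemma isSph_d_of_isSph_d {m k : ℕ} (hk : k ≤ m + 2) {w : K.obj (m + 2)}
    (hw : ∀ j : Fin (m + 3), (j : ℕ) ≠ k → K.IsSph b (K.d (m + 1) j w)) :
    K.IsSph b (K.d (m + 1) k w) := by
  intro i
  rcases Nat.lt_or_ge (i : ℕ) k with hik | hik
  · rw [K.dd m i k hik hk]
    exact (hw ⟨i, by omega⟩ (show i ≠ k by omega)).d_eq (by omega)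
  · rw [K.d_d_of_le hik (by omega)]
    exact (hw ⟨i + 1, by omega⟩ (show (i : ℕ) + 1 ≠ k by omega)).d_eq (by omega)

lemma isRelSph_d_of_isRelSph_d {m k : ℕ} (hk1 : 1 ≤ k) (hk : k ≤ m + 2) {w : K.obj (m + 2)}
    (hw0 : K.d (m + 1) 0 w ∈ L.mem (m + 1))
    (hw : ∀ j : Fin (m + 3), 1 ≤ (j : ℕ) → (j : ℕ) ≠ k → K.IsRelSph L b (K.d (m + 1) j w)) :
    K.IsRelSph L b (K.d (m + 1) k w) := by
  refine ⟨?_, fun i hi1 => ?_⟩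
  · rw [K.dd m 0 k (by omega) hk]
    exact L.d_mem m _ (by omega) _ hw0
  rcases Nat.lt_or_ge (i : ℕ) k with hik | hik
  · rw [K.dd m i k hik hk]
    exact (hw ⟨i, by omega⟩ hi1 (show i ≠ k by omega)).d_eq (by omega) (by omega)
  · rw [K.d_d_of_le hik (by omega)]
    have hwi := hw ⟨i + 1, by omega⟩ (show 1 ≤ (i : ℕ) + 1 by omega)
      (show (i : ℕ) + 1 ≠ k by omega)
    exact hwi.d_eq hk1 (by omega)

end Spherical

section Absolute

variable {K} {b : K.obj 0} {m : ℕ}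

lemma Homotopic.simplexClass_eq {x y : K.obj (m + 1)} (hx : K.IsSph b x) (hy : K.IsSph b y)
    (h : K.Homotopic x y) :
    K.simplexClass (K.ptSub b) x hx = K.simplexClass (K.ptSub b) y hy := by
  obtain ⟨w, hw⟩ := h
  have hface (i : ℕ) (hi : i < m + 3) : K.d (m + 1) i w = K.homotopyTuple x y ⟨i, hi⟩ :=
    congrFun hw ⟨i, hi⟩
  refine K.simplexClass_eq_of_faces (K.ptSub b) w hx hy (fun i hi => ?_) ?_ ?_
  · rw [hface i (by omega)]
    show _ = K.basept b (m + 1)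
    simp [homotopyTuple, hi, hx.d_eq (Nat.le_of_lt hi), K.s_basept b m m le_rfl]
  · simp [hface, homotopyTuple]
  · simp [hface, homotopyTuple]

lemma isSph_mulTuple {x y z : K.obj (m + 1)} (hx : K.IsSph b x) (hy : K.IsSph b y)
    (hz : K.IsSph b z) (i : Fin (m + 3)) : K.IsSph b (K.mulTuple b x y z i) := by
  unfold mulTuple
  split_ifs
  exacts [K.basept_isSph b m, hy, hz, hx]

lemma MulWitness.simplexClass_eq_add {x y z : K.obj (m + 1)} (hx : K.IsSph b x)
    (hy : K.IsSph b y) (hz : K.IsSph b z) (h : K.MulWitness b x y z) :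
    K.simplexClass (K.ptSub b) z hz
      = K.simplexClass (K.ptSub b) x hx + K.simplexClass (K.ptSub b) y hy := by
  obtain ⟨w, hw⟩ := h
  have hface (i : ℕ) (hi : i < m + 3) : K.d (m + 1) i w = K.mulTuple b x y z ⟨i, hi⟩ :=
    congrFun hw ⟨i, hi⟩
  refine K.simplexClass_eq_add_of_faces (K.ptSub b) w hx hy hz (fun i hi => ?_) ?_ ?_ ?_
  · rw [hface i (by omega)]
    simp only [mulTuple, if_pos hi]
    rfl
  all_goals simp [hface, mulTuple]

lemma exists_mulWitness (hK : K.IsKan) {x y : K.obj (m + 1)} (hx : K.IsSph b x)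
    (hy : K.IsSph b y) : ∃ z, K.IsSph b z ∧ K.MulWitness b x y z := by
  set c := K.mulTuple b x y (K.basept b (m + 1))
  have hc := isSph_mulTuple hx hy (K.basept_isSph b m)
  obtain ⟨w, hw⟩ := hK (m + 1) (m + 1) (by omega) c (hornCompat_of_isSph (m + 1) hc)
  refine ⟨K.d (m + 1) (m + 1) w, isSph_d_of_isSph_d (by omega) fun j hj => ?_,
    w, K.bdry_eq_of_fill hw (fun i hi => ?_) (fun i hi => ?_)⟩
  · rw [hw j hj]
    exact hc j
  · simp [c, mulTuple, hi]
  · simp [mulTuple, hi]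

variable (b m) in
noncomputable def hurewicz : K.piGrp b m → K.Hpt b (m + 1) :=
  Quot.lift (fun x => K.simplexClass (K.ptSub b) x.1 x.2)
    fun x y h => Homotopic.simplexClass_eq x.2 y.2 h

lemma HurewiczChar.apply_cls {φ : K.piGrp b m → K.Hpt b (m + 1)} (hφ : K.HurewiczChar b m φ)
    (x : K.Sph b m) : φ (K.cls b m x) = K.simplexClass (K.ptSub b) x.1 x.2 :=
  hφ x ⟨_, _⟩ rfl

lemma hurewicz_char : K.HurewiczChar b m (hurewicz b m) := fun x z hz =>
  (K.homCls_eq_simplexClass (K.ptSub b) x.2 z hz).symm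

lemma HurewiczChar.map_mul (hK : K.IsKan) {φ : K.piGrp b m → K.Hpt b (m + 1)}
    (hφ : K.HurewiczChar b m φ) {mul : K.piGrp b m → K.piGrp b m → K.piGrp b m}
    (hmul : K.MulDescends b m mul) (a a' : K.piGrp b m) : φ (mul a a') = φ a + φ a' := by
  induction a using Quot.ind with | mk x => ?_
  induction a' using Quot.ind with | mk y => ?_
  obtain ⟨z, hz, hxyz⟩ := exists_mulWitness hK x.2 y.2
  change φ (mul (K.cls b m x) (K.cls b m y)) = φ (K.cls b m x) + φ (K.cls b m y)
  rw [hmul x y ⟨z, hz⟩ hxyz, hφ.apply_cls x, hφ.apply_cls y]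
  exact (hφ.apply_cls ⟨z, hz⟩).trans (hxyz.simplexClass_eq_add x.2 y.2 hz)

lemma IsSph.map {K' : SSetC} (f : SMap K K') {x : K.obj (m + 1)} (hx : K.IsSph b x) :
    K'.IsSph (f.app 0 b) (f.app (m + 1) x) := fun i => by
  rw [← f.comm_d m i (by omega), hx i, f.basept_app]

lemma HurewiczChar.naturality {K' : SSetC} {b' : K'.obj 0} {f : SMap K K'}
    (hfb : f.app 0 b = b')
    {φ : K.piGrp b m → K.Hpt b (m + 1)} {φ' : K'.piGrp b' m → K'.Hpt b' (m + 1)}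
    {F : K.piGrp b m → K'.piGrp b' m} {Ψ : K.Hpt b (m + 1) → K'.Hpt b' (m + 1)}
    {hM : ∀ n x, x ∈ K.topSub.mem n → f.app n x ∈ K'.topSub.mem n}
    (hφ : K.HurewiczChar b m φ) (hφ' : K'.HurewiczChar b' m φ') (hF : Induces b b' m f F)
    (hΨ : HInduces f ℤ K.topSub (K.ptSub b) K'.topSub (K'.ptSub b') hM (m + 1) Ψ)
    (a : K.piGrp b m) : Ψ (φ a) = φ' (F a) := by
  induction a using Quot.ind with | mk x => ?_
  subst hfb
  have hfx := x.2.map f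
  change Ψ (φ (K.cls b m x)) = φ' (F (K.cls b m x))
  rw [hφ.apply_cls, hF x ⟨_, hfx⟩ rfl]
  have hxN (hx : x.1 ∈ (K.ptSub b).mem (m + 1)) :
      f.app (m + 1) x.1 ∈ (K'.ptSub (f.app 0 b)).mem (m + 1) :=
    (congrArg (f.app (m + 1)) hx).trans (f.basept_app b _)
  exact (hΨ.apply_simplexClass x.2 hfx hxN).trans (hφ'.apply_cls ⟨_, hfx⟩).symm

end Absolute

section Relative

variable {K} {L : Subcomplex K} {b : K.obj 0} {m : ℕ}

lemma HomotopicRel.simplexClass_eq (hb : b ∈ L.mem 0) {x y : K.obj (m + 1)}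
    (hx : K.IsRelSph L b x) (hy : K.IsRelSph L b y) (h : K.HomotopicRel L x y) :
    K.simplexClass L x (hx.d_mem hb) = K.simplexClass L y (hy.d_mem hb) := by
  obtain ⟨-, -, -, hL, hLmem, w, hw⟩ := h
  have hface (i : ℕ) (hi : i < m + 3) : K.d (m + 1) i w = K.relTuple hL x y ⟨i, hi⟩ :=
    congrFun hw ⟨i, hi⟩
  refine K.simplexClass_eq_of_faces L w _ _ (fun i hi => ?_) ?_ ?_
  · rw [hface i (by omega)]
    rcases Nat.eq_zero_or_pos i with rfl | hi0
    · simpa [relTuple] using hLmem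
    · simp only [relTuple, if_neg hi0.ne', if_pos hi, hx.d_eq hi0 hi.le, K.s_basept b m m le_rfl]
      exact basept_mem hb _
  · simp [hface, relTuple]
  · simp [hface, relTuple]

lemma isRelSph_relMulTuple (hb : b ∈ L.mem 0) {h x y z : K.obj (m + 2)}
    (hx : K.IsRelSph L b x) (hy : K.IsRelSph L b y) (hz : K.IsRelSph L b z) {i : Fin (m + 4)}
    (hi : 1 ≤ (i : ℕ)) : K.IsRelSph L b (K.relMulTuple b h x y z i) := by
  unfold relMulTuple
  rw [if_neg (by omega)]
  split_ifs
  exacts [isRelSph_basept hb (m + 1), hy, hz, hx]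

lemma RelMulWitness.simplexClass_eq_add (hb : b ∈ L.mem 0) {x y z : K.obj (m + 2)}
    (hx : K.IsRelSph L b x) (hy : K.IsRelSph L b y) (hz : K.IsRelSph L b z)
    (h : K.RelMulWitness L b x y z) :
    K.simplexClass L z (hz.d_mem hb)
      = K.simplexClass L x (hx.d_mem hb) + K.simplexClass L y (hy.d_mem hb) := by
  obtain ⟨h, hL, w, hw⟩ := h
  have hface (i : ℕ) (hi : i < m + 4) : K.d (m + 2) i w = K.relMulTuple b h x y z ⟨i, hi⟩ :=
    congrFun hw ⟨i, hi⟩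
  refine K.simplexClass_eq_add_of_faces L w _ _ _ (fun i hi => ?_) ?_ ?_ ?_
  · rw [hface i (by omega)]
    rcases Nat.eq_zero_or_pos i with rfl | hi0
    · simpa [relMulTuple] using hL
    · simp only [relMulTuple, if_neg hi0.ne', if_pos hi]
      exact basept_mem hb _
  all_goals simp [hface, relMulTuple, show ¬ m + 3 < m + 1 by omega]

lemma exists_relMulWitness (hK : K.IsKan) (hLKan : L.IsKan) (hb : b ∈ L.mem 0)
    {x y : K.obj (m + 2)} (hx : K.IsRelSph L b x) (hy : K.IsRelSph L b y) :
    ∃ z, K.IsRelSph L b z ∧ K.RelMulWitness L b x y z := by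
  have hc (h : K.obj (m + 2)) (j : Fin (m + 4)) (hj : 1 ≤ (j : ℕ)) :=
    isRelSph_relMulTuple (h := h) hb hx hy (isRelSph_basept hb (m + 1)) hj
  -- The `0`-th face `h` of the filler has to lie in `L`, so it is first obtained by filling, in
  -- `L`, the horn formed by the `0`-th faces of the other entries.
  set c' : Fin (m + 3) → K.obj (m + 1) := fun i =>
    K.d (m + 1) 0 (K.relMulTuple b (K.basept b (m + 2)) x y (K.basept b (m + 2)) i.succ)
  have hc' (i : Fin (m + 3)) := hc (K.basept b (m + 2)) i.succ (by simp)
  obtain ⟨h, hL, hh⟩ := hLKan (m + 1) (m + 1) (by omega) c' (fun i _ => (hc' i).1)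
    (hornCompat_of_isSph (m + 1) fun i => (hc' i).isSph_d_zero)
  set c := K.relMulTuple b h x y (K.basept b (m + 2))
  have hcompat : K.HornCompat (m + 2) c := by
    refine hornCompat_of_isRelSph (m + 2) (fun j hj _ => hc h j hj) fun j hj hjk => ?_
    have hj' : (⟨(j : ℕ) - 1, by omega⟩ : Fin (m + 3)).succ = j :=
      Fin.ext (by simp only [Fin.val_succ]; omega)
    rw [show c 0 = h by simp [c, relMulTuple],
      hh ⟨(j : ℕ) - 1, by omega⟩ (show (j : ℕ) - 1 ≠ m + 1 by omega)]
    simp only [c', hj', c, relMulTuple, if_neg (show (j : ℕ) ≠ 0 by omega)]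
  obtain ⟨w, hw⟩ := hK (m + 2) (m + 2) (by omega) c hcompat
  refine ⟨K.d (m + 2) (m + 2) w, isRelSph_d_of_isRelSph_d (by omega) (by omega) ?_ ?_,
    h, hL, w, K.bdry_eq_of_fill hw (fun i hi => ?_) (fun i hi => ?_)⟩
  · rw [hw ⟨0, by omega⟩ (by simp)]
    simpa [c, relMulTuple] using hL
  · intro j hj hjk
    rw [hw j hjk]
    exact hc h j hj
  · simp [c, relMulTuple, hi]
  · simp [relMulTuple, hi]

variable (L b m) in
noncomputable def relHurewicz (hb : b ∈ L.mem 0) : K.piRel L b m → K.Hrel L (m + 1) :=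
  Quot.lift (fun x => K.simplexClass L x.1 (x.2.d_mem hb))
    fun x y h => HomotopicRel.simplexClass_eq hb x.2 y.2 h

lemma RelHurewiczChar.apply_relCls (hb : b ∈ L.mem 0) {φ : K.piRel L b m → K.Hrel L (m + 1)}
    (hφ : K.RelHurewiczChar L b m φ) (x : K.RelSph L b m) :
    φ (K.relCls L b m x) = K.simplexClass L x.1 (x.2.d_mem hb) :=
  hφ x ⟨_, _⟩ rfl

lemma relHurewicz_char (hb : b ∈ L.mem 0) : K.RelHurewiczChar L b m (relHurewicz L b m hb) :=
  fun x z hz => (K.homCls_eq_simplexClass L (x.2.d_mem hb) z hz).symm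

lemma RelHurewiczChar.map_mul (hK : K.IsKan) (hLKan : L.IsKan) (hb : b ∈ L.mem 0)
    {φ : K.piRel L b (m + 1) → K.Hrel L (m + 2)} (hφ : K.RelHurewiczChar L b (m + 1) φ)
    {mul : K.piRel L b (m + 1) → K.piRel L b (m + 1) → K.piRel L b (m + 1)}
    (hmul : K.RelMulDescends L b m mul) (a a' : K.piRel L b (m + 1)) :
    φ (mul a a') = φ a + φ a' := by
  induction a using Quot.ind with | mk x => ?_
  induction a' using Quot.ind with | mk y => ?_
  obtain ⟨z, hz, hxyz⟩ := exists_relMulWitness hK hLKan hb x.2 y.2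
  change φ (mul (K.relCls L b (m + 1) x) (K.relCls L b (m + 1) y))
    = φ (K.relCls L b (m + 1) x) + φ (K.relCls L b (m + 1) y)
  rw [hmul x y ⟨z, hz⟩ hxyz, hφ.apply_relCls hb x, hφ.apply_relCls hb y]
  exact (hφ.apply_relCls hb ⟨z, hz⟩).trans (hxyz.simplexClass_eq_add hb x.2 y.2 hz)

lemma IsRelSph.map {K' : SSetC} {L' : Subcomplex K'} (f : SMap K K')
    (hf : ∀ n, ∀ x ∈ L.mem n, f.app n x ∈ L'.mem n) {x : K.obj (m + 1)} (hx : K.IsRelSph L b x) :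
    K'.IsRelSph L' (f.app 0 b) (f.app (m + 1) x) := by
  refine ⟨?_, fun i hi => ?_⟩
  · rw [← f.comm_d m 0 (by omega)]
    exact hf m _ hx.1
  · rw [← f.comm_d m i (by omega), hx.2 i hi, f.basept_app]

lemma RelHurewiczChar.naturality (hb : b ∈ L.mem 0) {K' : SSetC} {L' : Subcomplex K'}
    {b' : K'.obj 0} {f : SMap K K'} (hfb : f.app 0 b = b')
    (hf : ∀ n, ∀ x ∈ L.mem n, f.app n x ∈ L'.mem n)
    {φ : K.piRel L b m → K.Hrel L (m + 1)} {φ' : K'.piRel L' b' m → K'.Hrel L' (m + 1)}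
    {F : K.piRel L b m → K'.piRel L' b' m} {Ψ : K.Hrel L (m + 1) → K'.Hrel L' (m + 1)}
    {hM : ∀ n x, x ∈ K.topSub.mem n → f.app n x ∈ K'.topSub.mem n}
    (hφ : K.RelHurewiczChar L b m φ) (hφ' : K'.RelHurewiczChar L' b' m φ')
    (hF : ∀ (x : K.RelSph L b m) (y : K'.RelSph L' b' m),
      f.app (m + 1) x.1 = y.1 → F (K.relCls L b m x) = K'.relCls L' b' m y)
    (hΨ : HInduces f ℤ K.topSub L K'.topSub L' hM (m + 1) Ψ)
    (a : K.piRel L b m) : Ψ (φ a) = φ' (F a) := by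
  induction a using Quot.ind with | mk x => ?_
  subst hfb
  have hb' : f.app 0 b ∈ L'.mem 0 := hf 0 b hb
  have hfx := x.2.map f hf
  change Ψ (φ (K.relCls L b m x)) = φ' (F (K.relCls L b m x))
  rw [hφ.apply_relCls hb, hF x ⟨_, hfx⟩ rfl]
  exact (hΨ.apply_simplexClass (x.2.d_mem hb) (hfx.d_mem hb') (hf _ _)).trans
    (hφ'.apply_relCls hb' ⟨_, hfx⟩).symm

end Relative

end SSetC

open SSetC in
/-- For every pointed Kan complex `(K,⋆)` and every pointed pair
`(K,L,⋆)` of Kan complexes, the Hurewicz map `φ([x]_π) := [x]_H` is a well-defined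
natural group homomorphism `π_n(K,⋆) → H_n(K,⋆)` resp. `π_n(K,L,⋆) → H_n(K,L)`
(with integer coefficients), for `n = m+1 ≥ 1`:  it exists on the quotient
(well-definedness), is additive with respect to any product induced by horn
filling, and is compatible with the maps induced by (pointed, pairwise) simplicial
maps on homotopy and homology (naturality). -/
theorem hurewicz_welldefined (K : SSetC) (hK : K.IsKan) (b : K.obj 0)
    (L : Subcomplex K) (hLKan : L.IsKan) (hb : b ∈ L.mem 0) (m : ℕ) :
    (∃ φ : K.piGrp b m → K.Hpt b (m + 1),
      K.HurewiczChar b m φ ∧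
      (∀ mul : K.piGrp b m → K.piGrp b m → K.piGrp b m, K.MulDescends b m mul →
        ∀ a a' : K.piGrp b m, φ (mul a a') = φ a + φ a')) ∧
    (∀ (K' : SSetC) (b' : K'.obj 0) (f : SMap K K'), f.app 0 b = b' →
      ∀ (φ : K.piGrp b m → K.Hpt b (m + 1)) (φ' : K'.piGrp b' m → K'.Hpt b' (m + 1))
        (F : K.piGrp b m → K'.piGrp b' m)
        (Ψ : K.Hpt b (m + 1) → K'.Hpt b' (m + 1)),
        K.HurewiczChar b m φ → K'.HurewiczChar b' m φ' → Induces b b' m f F →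
        HInduces f ℤ K.topSub (K.ptSub b) K'.topSub (K'.ptSub b')
          (fun _ x _ => Set.mem_univ x) (m + 1) Ψ →
        ∀ a : K.piGrp b m, Ψ (φ a) = φ' (F a)) ∧
    (∃ φ : K.piRel L b m → K.Hrel L (m + 1),
      K.RelHurewiczChar L b m φ ∧
      (∀ mul : K.piRel L b (m + 1) → K.piRel L b (m + 1) → K.piRel L b (m + 1),
        K.RelMulDescends L b m mul →
        ∀ (φ₁ : K.piRel L b (m + 1) → K.Hrel L (m + 2)),
          K.RelHurewiczChar L b (m + 1) φ₁ →
          ∀ a a' : K.piRel L b (m + 1), φ₁ (mul a a') = φ₁ a + φ₁ a')) ∧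
    (∀ (K' : SSetC) (L' : Subcomplex K') (b' : K'.obj 0) (f : SMap K K'),
      f.app 0 b = b' → ∀ hf : ∀ (n : ℕ), ∀ x ∈ L.mem n, f.app n x ∈ L'.mem n,
      ∀ (φ : K.piRel L b m → K.Hrel L (m + 1)) (φ' : K'.piRel L' b' m → K'.Hrel L' (m + 1))
        (F : K.piRel L b m → K'.piRel L' b' m)
        (Ψ : K.Hrel L (m + 1) → K'.Hrel L' (m + 1)),
        K.RelHurewiczChar L b m φ → K'.RelHurewiczChar L' b' m φ' →
        (∀ (x : K.RelSph L b m) (y : K'.RelSph L' b' m),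
          f.app (m + 1) x.1 = y.1 → F (K.relCls L b m x) = K'.relCls L' b' m y) →
        HInduces f ℤ K.topSub L K'.topSub L'
          (fun _ x _ => Set.mem_univ x) (m + 1) Ψ →
        ∀ a : K.piRel L b m, Ψ (φ a) = φ' (F a)) := by
  refine ⟨⟨hurewicz b m, hurewicz_char, fun _ hmul => (hurewicz_char).map_mul hK hmul⟩,
    fun _ _ _ hfb _ _ _ _ hφ hφ' hF hΨ => hφ.naturality hfb hφ' hF hΨ,
    ⟨relHurewicz L b m hb, relHurewicz_char hb,
      fun _ hmul _ hφ => hφ.map_mul hK hLKan hb hmul⟩,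
    fun _ _ _ _ hfb hf _ _ _ _ hφ hφ' hF hΨ => hφ.naturality hb hfb hf hφ' hF hΨ⟩
end
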